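/- arXiv:0904.4535 — 9 statements merged into one kernel-verified Lean document; each statement's English description precedes it below -/
import Mathlib

section
/- Let (X,Σ,μ) be a σ-finite measure space, 1 ≤ a < b ≤ ∞, and ψ : (a,b) → (0,∞) continuous. Let f : X → ℝ be measurable with ‖f‖_{G(ψ)} < ∞, let (q(k))_{k≥1} be a sequence with q(k) ∈ (a,b), and let (g_k)_{k≥1} be measurable functions such that ∑_k g_k(x) = g(x) for μ-almost every x and S := ∑_{k=1}^∞ ψ(q(k)) |g_k|_{q(k)'} < ∞. Then f·g is μ-integrable and |∫_X f g dμ| ≤ ‖f‖_{G(ψ)} · S (generalized Hölder inequality). -/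
open MeasureTheory Filter Set
open scoped ENNReal Topology NNReal

noncomputable section

/-- The `L_p` (quasi-)norm `|f|_p = (∫ |f|^p dμ)^{1/p}` with values in `[0,∞]`. -/
def lpNorm {X : Type*} [MeasurableSpace X] (μ : Measure X) (f : X → ℝ) (p : ℝ) : ℝ≥0∞ :=
  (∫⁻ x, ENNReal.ofReal (|f x| ^ p) ∂μ) ^ (1 / p)

/-- The interval `(a, b)` of exponents, with possibly infinite right endpoint `b`. -/
def gIoo (a : ℝ) (b : ℝ≥0∞) : Set ℝ := {p : ℝ | a < p ∧ ENNReal.ofReal p < b}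

/-- The Grand Lebesgue norm `‖f‖_{G(ψ)} = sup_{p ∈ (a,b)} |f|_p / ψ(p)`. -/
def grandNorm {X : Type*} [MeasurableSpace X] (μ : Measure X) (ψ : ℝ → ℝ) (a : ℝ) (b : ℝ≥0∞)
    (f : X → ℝ) : ℝ≥0∞ :=
  ⨆ p ∈ gIoo a b, lpNorm μ f p / ENNReal.ofReal (ψ p)

/-- The conjugate exponent `q' = q/(q-1)`. -/
def conjExp (q : ℝ) : ℝ := q / (q - 1)

/-- A decomposition `g = ∑ₖ gₖ` (μ-a.e.) with exponents `q k ∈ (a,b)`, as used in the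
definition of the Small Lebesgue norm. -/
structure SLDecomp {X : Type*} [MeasurableSpace X] (μ : Measure X) (a : ℝ) (b : ℝ≥0∞)
    (g : X → ℝ) where
  gk : ℕ → X → ℝ
  q : ℕ → ℝ
  meas : ∀ k, Measurable (gk k)
  mem : ∀ k, q k ∈ gIoo a b
  sum : ∀ᵐ x ∂μ, HasSum (fun k => gk k x) (g x)

/-- The cost `∑ₖ ψ(q(k)) |gₖ|_{q(k)'}` of a decomposition. -/
def SLDecomp.cost {X : Type*} [MeasurableSpace X] {μ : Measure X} {a : ℝ} {b : ℝ≥0∞}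
    {g : X → ℝ} (d : SLDecomp μ a b g) (ψ : ℝ → ℝ) : ℝ≥0∞ :=
  ∑' k, ENNReal.ofReal (ψ (d.q k)) * lpNorm μ (d.gk k) (conjExp (d.q k))

/-- The (Bilateral) Small Lebesgue norm `‖g‖_{SL(ψ)}`. -/
def smallNorm {X : Type*} [MeasurableSpace X] (μ : Measure X) (ψ : ℝ → ℝ) (a : ℝ) (b : ℝ≥0∞)
    (g : X → ℝ) : ℝ≥0∞ :=
  ⨅ d : SLDecomp μ a b g, d.cost ψ

/-- The filter describing `p → b−` when `b ≤ ∞`. -/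
def rightEndFilter (b : ℝ≥0∞) : Filter ℝ := if b = ⊤ then atTop else 𝓝[<] b.toReal

/-- The measure `μ` is nonatomic. -/
def IsNonatomic {X : Type*} [MeasurableSpace X] (μ : Measure X) : Prop :=
  ∀ A : Set X, MeasurableSet A → 0 < μ A →
    ∃ B ⊆ A, MeasurableSet B ∧ 0 < μ B ∧ μ B < μ A

/-- The fundamental function of the Grand Lebesgue space: `φ(G(ψ), δ) = sup_p δ^{1/p}/ψ(p)`. -/
def fund (ψ : ℝ → ℝ) (a : ℝ) (b : ℝ≥0∞) (δ : ℝ≥0∞) : ℝ≥0∞ :=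
  ⨆ p ∈ gIoo a b, δ ^ (1 / p) / ENNReal.ofReal (ψ p)


/-!
Pointwise, `|f g| ≤ ∑ₖ |f| |gₖ|` almost everywhere, so by monotone convergence
`∫ |f g| ≤ ∑ₖ ∫ |f| |gₖ|`. Hölder's inequality with exponents `q(k)` and `q(k)'` bounds the
`k`-th term by `|f|_{q(k)} |gₖ|_{q(k)'}`, and `|f|_{q(k)} ≤ ‖f‖_{G(ψ)} ψ(q(k))` by the
definition of the Grand Lebesgue norm. Summing gives `∫ |f g| ≤ ‖f‖_{G(ψ)} S < ∞`.
-/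

section

variable {X : Type*} [MeasurableSpace X] {μ : Measure X}
  {ψ : ℝ → ℝ} {a : ℝ} {b : ℝ≥0∞} {p : ℝ}

lemma lpNorm_eq_eLpNorm' (f : X → ℝ) (hp : 0 ≤ p) : lpNorm μ f p = eLpNorm' f p μ := by
  simp only [_root_.lpNorm, eLpNorm', Real.enorm_eq_ofReal_abs,
    ENNReal.ofReal_rpow_of_nonneg (abs_nonneg _) hp]

lemma lintegral_enorm_mul_le_lpNorm_mul_lpNorm {f g : X → ℝ} {q : ℝ} (hpq : p.HolderConjugate q)
    (hf : AEMeasurable f μ) (hg : AEMeasurable g μ) :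
    ∫⁻ x, ‖f x * g x‖ₑ ∂μ ≤ lpNorm μ f p * lpNorm μ g q := by
  rw [lpNorm_eq_eLpNorm' f hpq.nonneg, lpNorm_eq_eLpNorm' g hpq.symm.nonneg]
  simpa only [enorm_mul, Pi.mul_apply, eLpNorm'] using
    ENNReal.lintegral_mul_le_Lp_mul_Lq μ hpq hf.enorm hg.enorm

lemma lintegral_enorm_mul_le_tsum {f g : X → ℝ} {gk : ℕ → X → ℝ} (hf : AEMeasurable f μ)
    (hgk : ∀ k, AEMeasurable (gk k) μ) (hsum : ∀ᵐ x ∂μ, HasSum (fun k => gk k x) (g x)) :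
    ∫⁻ x, ‖f x * g x‖ₑ ∂μ ≤ ∑' k, ∫⁻ x, ‖f x * gk k x‖ₑ ∂μ :=
  calc ∫⁻ x, ‖f x * g x‖ₑ ∂μ ≤ ∫⁻ x, ∑' k, ‖f x * gk k x‖ₑ ∂μ := by
        refine lintegral_mono_ae ?_
        filter_upwards [hsum] with x hx
        exact (hx.mul_left (f x)).enorm_le_of_bounded ENNReal.summable.hasSum fun _ => le_rfl
    _ = ∑' k, ∫⁻ x, ‖f x * gk k x‖ₑ ∂μ :=
        lintegral_tsum fun k => (hf.mul (hgk k)).enorm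

lemma lpNorm_le_grandNorm_mul {f : X → ℝ} (hp : p ∈ gIoo a b) (hfG : grandNorm μ ψ a b f ≠ ⊤) :
    lpNorm μ f p ≤ grandNorm μ ψ a b f * ENNReal.ofReal (ψ p) :=
  (ENNReal.div_le_iff_le_mul (Or.inr hfG) (Or.inl ENNReal.ofReal_ne_top)).1 <|
    le_biSup (fun p => lpNorm μ f p / ENNReal.ofReal (ψ p)) hp

lemma lintegral_enorm_mul_le_grandNorm_mul {f g : X → ℝ} (ha : 1 ≤ a) (hp : p ∈ gIoo a b)
    (hfG : grandNorm μ ψ a b f ≠ ⊤) (hf : AEMeasurable f μ) (hg : AEMeasurable g μ) :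
    ∫⁻ x, ‖f x * g x‖ₑ ∂μ ≤
      grandNorm μ ψ a b f * (ENNReal.ofReal (ψ p) * lpNorm μ g (conjExp p)) :=
  calc ∫⁻ x, ‖f x * g x‖ₑ ∂μ ≤ lpNorm μ f p * lpNorm μ g (conjExp p) :=
        lintegral_enorm_mul_le_lpNorm_mul_lpNorm
          (Real.HolderConjugate.conjExponent (ha.trans_lt hp.1)) hf hg
    _ ≤ grandNorm μ ψ a b f * ENNReal.ofReal (ψ p) * lpNorm μ g (conjExp p) := by
        gcongr
        exact lpNorm_le_grandNorm_mul hp hfG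
    _ = grandNorm μ ψ a b f * (ENNReal.ofReal (ψ p) * lpNorm μ g (conjExp p)) := mul_assoc _ _ _

end

theorem generalized_holder_general {X : Type*} [MeasurableSpace X] (μ : Measure X)
    (a : ℝ) (b : ℝ≥0∞) (ha : 1 ≤ a)
    (ψ : ℝ → ℝ)
    (f g : X → ℝ) (hf : Measurable f) (hg : Measurable g)
    (hfG : grandNorm μ ψ a b f < ⊤)
    (q : ℕ → ℝ) (hq : ∀ k, q k ∈ gIoo a b)
    (gk : ℕ → X → ℝ) (hgk : ∀ k, Measurable (gk k))
    (hsum : ∀ᵐ x ∂μ, HasSum (fun k => gk k x) (g x))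
    (S : ℝ≥0∞) (hS : S = ∑' k, ENNReal.ofReal (ψ (q k)) * lpNorm μ (gk k) (conjExp (q k)))
    (hSfin : S < ⊤) :
    Integrable (fun x => f x * g x) μ ∧
      ENNReal.ofReal |∫ x, f x * g x ∂μ| ≤ grandNorm μ ψ a b f * S := by
  have hbound : ∫⁻ x, ‖f x * g x‖ₑ ∂μ ≤ grandNorm μ ψ a b f * S :=
    calc ∫⁻ x, ‖f x * g x‖ₑ ∂μ ≤ ∑' k, ∫⁻ x, ‖f x * gk k x‖ₑ ∂μ :=
          lintegral_enorm_mul_le_tsum hf.aemeasurable (fun k => (hgk k).aemeasurable) hsum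
      _ ≤ ∑' k, grandNorm μ ψ a b f *
            (ENNReal.ofReal (ψ (q k)) * lpNorm μ (gk k) (conjExp (q k))) :=
          ENNReal.tsum_le_tsum fun k => lintegral_enorm_mul_le_grandNorm_mul ha (hq k) hfG.ne
            hf.aemeasurable (hgk k).aemeasurable
      _ = grandNorm μ ψ a b f * S := by rw [ENNReal.tsum_mul_left, hS]
  have hint : Integrable (fun x => f x * g x) μ :=
    ⟨(hf.mul hg).aestronglyMeasurable, hbound.trans_lt (ENNReal.mul_lt_top hfG hSfin)⟩
  refine ⟨hint, ?_⟩
  rw [← Real.enorm_eq_ofReal_abs]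
  exact (enorm_integral_le_lintegral_enorm _).trans hbound

/-- Generalized Hölder inequality between the Grand and Small Lebesgue spaces. -/
theorem generalized_holder {X : Type*} [MeasurableSpace X] (μ : Measure X) [SigmaFinite μ]
    (a : ℝ) (b : ℝ≥0∞) (ha : 1 ≤ a) (hab : ENNReal.ofReal a < b)
    (ψ : ℝ → ℝ) (hψc : ContinuousOn ψ (gIoo a b)) (hψpos : ∀ p ∈ gIoo a b, 0 < ψ p)
    (f g : X → ℝ) (hf : Measurable f) (hg : Measurable g)
    (hfG : grandNorm μ ψ a b f < ⊤)
    (q : ℕ → ℝ) (hq : ∀ k, q k ∈ gIoo a b)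
    (gk : ℕ → X → ℝ) (hgk : ∀ k, Measurable (gk k))
    (hsum : ∀ᵐ x ∂μ, HasSum (fun k => gk k x) (g x))
    (S : ℝ≥0∞) (hS : S = ∑' k, ENNReal.ofReal (ψ (q k)) * lpNorm μ (gk k) (conjExp (q k)))
    (hSfin : S < ⊤) :
    Integrable (fun x => f x * g x) μ ∧
      ENNReal.ofReal |∫ x, f x * g x ∂μ| ≤ grandNorm μ ψ a b f * S :=
  generalized_holder_general μ a b ha ψ f g hf hg hfG q hq gk hgk hsum S hS hSfin

end
end

section
/- Let 1 < a < b ≤ ∞ and let ψ : (a,b) → (0,∞) be continuous with inf_{p∈(a,b)} ψ(p) > 0. Let g : ℕ → [0,∞) and suppose there is a constant K < ∞ such that for every f : ℕ → [0,∞) satisfying sup_{p∈(a,b)} (∑_{n} f_n^p)^{1/p}/ψ(p) ≤ 1 one has ∑_{n} f_n g_n ≤ K. Then ∑_{n} g_n^{a/(a−1)} < ∞, i.e. g ∈ ℓ^{a'} where a' = a/(a−1). -/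
/-! Let `c > 0` be a lower bound of `ψ` and `a' = a/(a-1)`. If `h ≥ 0` is supported on a finite
set with `∑ hₙ^a ≤ 1`, then `h ≤ 1`, so `∑ hₙ^p ≤ ∑ hₙ^a ≤ 1` for every `p > a`; hence `c • h`
lies in the unit ball of `G(ψ)` and `c ∑ gₙ hₙ ≤ K`. By the duality
`(∑_{n∈s} gₙ^{a'})^{1/a'} = max {∑_{n∈s} gₙ hₙ : ∑_{n∈s} hₙ^a ≤ 1}`, every finite partial sum
of `∑ gₙ^{a'}` is then at most `(K/c)^{a'}`. -/

open MeasureTheory Filter Set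
open scoped ENNReal Topology NNReal

noncomputable section

section

variable {ι : Type*}

namespace NNReal

theorem sum_rpow_le_of_forall_sum_mul_le (s : Finset ι) (x : ι → ℝ≥0) {p q : ℝ}
    (hpq : p.HolderConjugate q) {C : ℝ≥0}
    (hC : ∀ y : ι → ℝ≥0, ∑ i ∈ s, y i ^ q ≤ 1 → ∑ i ∈ s, x i * y i ≤ C) :
    ∑ i ∈ s, x i ^ p ≤ C ^ p := by
  obtain ⟨y, hy, hxy⟩ := (isGreatest_Lp s x hpq).1
  rw [← rpow_inv_le_iff hpq.pos, ← one_div, ← hxy]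
  exact hC y hy

theorem sum_rpow_le_one_of_le {s : Finset ι} {y : ι → ℝ≥0} {a p : ℝ} (ha : 0 < a) (hap : a ≤ p)
    (hy : ∑ i ∈ s, y i ^ a ≤ 1) : ∑ i ∈ s, y i ^ p ≤ 1 := by
  refine le_trans (Finset.sum_le_sum fun i hi => ?_) hy
  have hyi : y i ≤ 1 := by
    rw [← rpow_le_rpow_iff ha, one_rpow]
    exact (Finset.single_le_sum (fun _ _ => zero_le) hi).trans hy
  exact_mod_cast Real.rpow_le_rpow_of_exponent_ge' (y i).coe_nonneg hyi ha.le hap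

end NNReal

theorem tsum_ofReal_indicator_rpow_le {s : Finset ι} {y : ι → ℝ≥0}
    {a p c : ℝ} (ha : 0 < a) (hap : a ≤ p) (hc : 0 ≤ c) (hy : ∑ i ∈ s, y i ^ a ≤ 1) :
    (∑' i, ENNReal.ofReal ((s : Set ι).indicator (fun i => c * y i) i ^ p)) ^ (1 / p) ≤
      ENNReal.ofReal c := by
  have hp : 0 < p := ha.trans_le hap
  set f := (s : Set ι).indicator fun i => c * y i
  have hf : ∀ i, 0 ≤ f i := Set.indicator_nonneg fun i _ => by positivity
  have hsum : ∑ i ∈ s, f i ^ p ≤ c ^ p := by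
    have hyp : ∑ i ∈ s, (y i : ℝ) ^ p ≤ 1 := by
      exact_mod_cast NNReal.sum_rpow_le_one_of_le ha hap hy
    calc ∑ i ∈ s, f i ^ p = c ^ p * ∑ i ∈ s, (y i : ℝ) ^ p := by
          rw [Finset.mul_sum]
          refine Finset.sum_congr rfl fun i hi => ?_
          rw [show f i = c * y i from Set.indicator_of_mem (Finset.mem_coe.2 hi) _,
            Real.mul_rpow hc (y i).coe_nonneg]
      _ ≤ c ^ p := mul_le_of_le_one_right (by positivity) hyp
  rw [tsum_eq_sum (s := s) fun i hi => by simp [f, hi, hp.ne'],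
    ← ENNReal.ofReal_sum_of_nonneg fun i _ => Real.rpow_nonneg (hf i) p, one_div,
    ENNReal.rpow_inv_le_iff hp, ENNReal.ofReal_rpow_of_nonneg hc hp.le]
  exact ENNReal.ofReal_le_ofReal hsum

theorem tsum_ofReal_indicator_mul_eq {s : Finset ι} {y : ι → ℝ≥0} {c : ℝ}
    (hc : 0 ≤ c) (g : ι → ℝ) :
    ∑' i, ENNReal.ofReal ((s : Set ι).indicator (fun i => c * y i) i * g i) =
      ENNReal.ofReal c * ↑(∑ i ∈ s, (g i).toNNReal * y i) := by
  rw [tsum_eq_sum (s := s) fun i hi => by simp [hi], ENNReal.ofNNReal_finsetSum,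
    Finset.mul_sum]
  refine Finset.sum_congr rfl fun i hi => ?_
  rw [Set.indicator_of_mem (Finset.mem_coe.2 hi), mul_assoc, ENNReal.ofReal_mul hc,
    ENNReal.ofReal_mul (y i).coe_nonneg, ENNReal.ofReal_coe_nnreal, mul_comm (y i : ℝ≥0∞),
    ENNReal.coe_mul]
  rfl

end

theorem mem_lp_conj_of_bounded_action_general
    (a : ℝ) (b : ℝ≥0∞) (ha : 1 < a)
    (ψ : ℝ → ℝ)
    (hψinf : ∃ c : ℝ, 0 < c ∧ ∀ p ∈ gIoo a b, c ≤ ψ p)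
    (g : ℕ → ℝ) (hg : ∀ n, 0 ≤ g n)
    (K : ℝ)
    (hK : ∀ f : ℕ → ℝ, (∀ n, 0 ≤ f n) →
      (⨆ p ∈ gIoo a b, (∑' n, ENNReal.ofReal (f n ^ p)) ^ (1 / p) / ENNReal.ofReal (ψ p)) ≤ 1 →
      (∑' n, ENNReal.ofReal (f n * g n)) ≤ ENNReal.ofReal K) :
    (∑' n, ENNReal.ofReal (g n ^ (a / (a - 1)))) < ⊤ := by
  obtain ⟨c, hc, hcψ⟩ := hψinf
  set q := a / (a - 1)
  have hqa : q.HolderConjugate a := (Real.HolderConjugate.conjExponent ha).symm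
  have hsum (s : Finset ℕ) : ∑ n ∈ s, (g n).toNNReal ^ q ≤ (K.toNNReal / c.toNNReal) ^ q := by
    refine NNReal.sum_rpow_le_of_forall_sum_mul_le s _ hqa fun y hy => ?_
    have hfg := hK ((s : Set ℕ).indicator fun n => c * y n)
      (Set.indicator_nonneg fun n _ => by positivity) <|
      iSup₂_le fun p hp => ENNReal.div_le_of_le_mul <| by
        rw [one_mul]
        exact (tsum_ofReal_indicator_rpow_le hqa.symm.pos hp.1.le hc.le hy).trans
          (ENNReal.ofReal_le_ofReal (hcψ p hp))
    rw [tsum_ofReal_indicator_mul_eq hc.le g, ENNReal.ofReal, ENNReal.ofReal,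
      ← ENNReal.coe_mul, ENNReal.coe_le_coe] at hfg
    rwa [le_div_iff₀' (by positivity)]
  calc ∑' n, ENNReal.ofReal (g n ^ q) = ∑' n, (((g n).toNNReal ^ q : ℝ≥0) : ℝ≥0∞) := by
        simp only [ENNReal.ofReal, Real.toNNReal_rpow_of_nonneg (hg _)]
    _ ≤ ((K.toNNReal / c.toNNReal) ^ q : ℝ≥0) :=
        tsum_le_of_sum_le' zero_le fun s => by exact_mod_cast hsum s
    _ < ⊤ := ENNReal.coe_lt_top

/-- If a nonnegative sequence `g` acts boundedly (by `K`) on the unit ball of the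
Grand Lebesgue sequence space `G(ψ)`, then `g ∈ ℓ^{a'}` with `a' = a/(a-1)`. -/
theorem mem_lp_conj_of_bounded_action
    (a : ℝ) (b : ℝ≥0∞) (ha : 1 < a) (hab : ENNReal.ofReal a < b)
    (ψ : ℝ → ℝ) (hψc : ContinuousOn ψ (gIoo a b))
    (hψinf : ∃ c : ℝ, 0 < c ∧ ∀ p ∈ gIoo a b, c ≤ ψ p)
    (g : ℕ → ℝ) (hg : ∀ n, 0 ≤ g n)
    (K : ℝ)
    (hK : ∀ f : ℕ → ℝ, (∀ n, 0 ≤ f n) →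
      (⨆ p ∈ gIoo a b, (∑' n, ENNReal.ofReal (f n ^ p)) ^ (1 / p) / ENNReal.ofReal (ψ p)) ≤ 1 →
      (∑' n, ENNReal.ofReal (f n * g n)) ≤ ENNReal.ofReal K) :
    (∑' n, ENNReal.ofReal (g n ^ (a / (a - 1)))) < ⊤ :=
  mem_lp_conj_of_bounded_action_general a b ha ψ hψinf g hg K hK

end
end

section
/- Let (X,Σ,μ) be a σ-finite measure space, 1 ≤ a < b ≤ ∞, and ψ : (a,b) → (0,∞) continuous. Let g : X → ℝ be measurable with ‖g‖_{SL(ψ)} < ∞, and let (E_n) be a decreasing sequence of measurable sets with lim_{n→∞} μ(E_n) = 0. Then lim_{n→∞} ‖g · 1_{E_n}‖_{SL(ψ)} = 0; that is, every element of the Bilateral Small Lebesgue space has absolutely continuous norm. -/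
open MeasureTheory Filter Set
open scoped ENNReal Topology NNReal

noncomputable section

/-! Fix one decomposition `g = ∑ₖ gₖ` of finite cost; restricting every piece to `Eₙ`
decomposes `1_{Eₙ} g`.
Each restricted term is dominated by the corresponding unrestricted one, and it tends to zero
by the absolute continuity of `∫ |gₖ|^{q(k)'} dμ`. Dominated convergence for the series
then sends the cost of the restricted decomposition, hence `‖1_{Eₙ} g‖_{SL(ψ)}`, to zero. -/

theorem ENNReal.tendsto_tsum_of_dominated_convergence {α β : Type*} [Countable β]
    {l : Filter α} [l.IsCountablyGenerated] {F : α → β → ℝ≥0∞} {f bound : β → ℝ≥0∞}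
    (h_bound : ∀ n k, F n k ≤ bound k) (h_fin : ∑' k, bound k ≠ ⊤)
    (h_lim : ∀ k, Tendsto (fun n => F n k) l (𝓝 (f k))) :
    Tendsto (fun n => ∑' k, F n k) l (𝓝 (∑' k, f k)) := by
  let : MeasurableSpace β := ⊤
  simp only [← lintegral_count] at h_fin ⊢
  exact tendsto_lintegral_filter_of_dominated_convergence bound
    (.of_forall fun _ => measurable_from_top) (.of_forall fun n => .of_forall (h_bound n))
    h_fin (.of_forall h_lim)

theorem conjExp_pos {q : ℝ} (hq : 1 < q) : 0 < conjExp q :=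
  div_pos (zero_lt_one.trans hq) (sub_pos.2 hq)

section lpNorm

variable {X : Type*} [MeasurableSpace X] (μ : Measure X) (f : X → ℝ) {p : ℝ}

theorem lpNorm_indicator_le (hp : 0 ≤ p) (s : Set X) :
    lpNorm μ (s.indicator f) p ≤ lpNorm μ f p := by
  refine ENNReal.rpow_le_rpow (lintegral_mono fun x => ?_) (one_div_nonneg.2 hp)
  refine ENNReal.ofReal_le_ofReal (Real.rpow_le_rpow (abs_nonneg _) ?_ hp)
  simpa only [Real.norm_eq_abs] using norm_indicator_le_norm_self f x

theorem lpNorm_indicator_eq (hp : p ≠ 0) {s : Set X} (hs : MeasurableSet s) :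
    lpNorm μ (s.indicator f) p = (∫⁻ x in s, ENNReal.ofReal (|f x| ^ p) ∂μ) ^ (1 / p) := by
  rw [_root_.lpNorm, ← lintegral_indicator hs]
  congr 1
  refine lintegral_congr fun x => ?_
  by_cases hx : x ∈ s <;> simp [hx, Real.zero_rpow hp]

theorem tendsto_lpNorm_indicator_nhds_zero {ι : Type*} {l : Filter ι} {s : ι → Set X}
    (hs : ∀ i, MeasurableSet (s i)) (hp : 0 < p) (hf : lpNorm μ f p ≠ ⊤)
    (hμs : Tendsto (μ ∘ s) l (𝓝 0)) :
    Tendsto (fun i => lpNorm μ ((s i).indicator f) p) l (𝓝 0) := by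
  have hint : ∫⁻ x, ENNReal.ofReal (|f x| ^ p) ∂μ ≠ ⊤ := by
    rwa [_root_.lpNorm, Ne, ENNReal.rpow_eq_top_iff_of_pos (one_div_pos.2 hp)] at hf
  simpa only [lpNorm_indicator_eq μ f hp.ne' (hs _), ENNReal.zero_rpow_of_pos (one_div_pos.2 hp)]
    using (tendsto_setLIntegral_zero hint hμs).ennrpow_const (1 / p)

end lpNorm

def SLDecomp.indicator {X : Type*} [MeasurableSpace X] {μ : Measure X} {a : ℝ} {b : ℝ≥0∞}
    {g : X → ℝ} (d : SLDecomp μ a b g) {s : Set X} (hs : MeasurableSet s) :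
    SLDecomp μ a b (s.indicator g) where
  gk k := s.indicator (d.gk k)
  q := d.q
  meas k := (d.meas k).indicator hs
  mem := d.mem
  sum := by
    filter_upwards [d.sum] with x hx
    by_cases hxs : x ∈ s
    · simpa [hxs] using hx
    · simp [hxs]

theorem smallNorm_absolutely_continuous_general {X : Type*} [MeasurableSpace X] (μ : Measure X)
    (a : ℝ) (b : ℝ≥0∞) (ha : 1 ≤ a)
    (ψ : ℝ → ℝ) (hψpos : ∀ p ∈ gIoo a b, 0 < ψ p)
    (g : X → ℝ) (hgS : smallNorm μ ψ a b g < ⊤)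
    (E : ℕ → Set X) (hEm : ∀ n, MeasurableSet (E n))
    (hE0 : Tendsto (fun n => μ (E n)) atTop (𝓝 0)) :
    Tendsto (fun n => smallNorm μ ψ a b ((E n).indicator g)) atTop (𝓝 0) := by
  obtain ⟨d, hd⟩ : ∃ d : SLDecomp μ a b g, d.cost ψ < ⊤ := iInf_lt_iff.mp hgS
  have hp : ∀ k, 0 < conjExp (d.q k) := fun k => conjExp_pos (ha.trans_lt (d.mem k).1)
  have hterm : ∀ k, Tendsto (fun n => ENNReal.ofReal (ψ (d.q k)) *
      lpNorm μ ((E n).indicator (d.gk k)) (conjExp (d.q k))) atTop (𝓝 0) := by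
    intro k
    have hfin : lpNorm μ (d.gk k) (conjExp (d.q k)) ≠ ⊤ :=
      ne_of_lt <| ENNReal.lt_top_of_mul_ne_top_right (ENNReal.ne_top_of_tsum_ne_top hd.ne k)
        (ENNReal.ofReal_pos.2 (hψpos _ (d.mem k))).ne'
    simpa using ENNReal.Tendsto.const_mul
      (tendsto_lpNorm_indicator_nhds_zero μ _ hEm (hp k) hfin hE0) (Or.inr ENNReal.ofReal_ne_top)
  have hcost : Tendsto (fun n => (d.indicator (hEm n)).cost ψ) atTop (𝓝 0) := by
    rw [SLDecomp.cost] at hd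
    simpa [SLDecomp.cost, SLDecomp.indicator] using ENNReal.tendsto_tsum_of_dominated_convergence
      (fun n k => mul_le_mul_right (lpNorm_indicator_le μ (d.gk k) (hp k).le (E n))
        (ENNReal.ofReal (ψ (d.q k)))) hd.ne hterm
  exact tendsto_of_tendsto_of_tendsto_of_le_of_le tendsto_const_nhds hcost
    (fun _ => zero_le) fun n => iInf_le _ (d.indicator (hEm n))

/-- Every element of the Bilateral Small Lebesgue space has absolutely continuous norm:
the `SL(ψ)`-norm of `g` restricted to a decreasing sequence of sets of measure tending
to zero tends to zero. -/
theorem smallNorm_absolutely_continuous {X : Type*} [MeasurableSpace X] (μ : Measure X)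
    [SigmaFinite μ]
    (a : ℝ) (b : ℝ≥0∞) (ha : 1 ≤ a) (hab : ENNReal.ofReal a < b)
    (ψ : ℝ → ℝ) (hψc : ContinuousOn ψ (gIoo a b)) (hψpos : ∀ p ∈ gIoo a b, 0 < ψ p)
    (g : X → ℝ) (hg : Measurable g) (hgS : smallNorm μ ψ a b g < ⊤)
    (E : ℕ → Set X) (hEm : ∀ n, MeasurableSet (E n)) (hEd : Antitone E)
    (hE0 : Tendsto (fun n => μ (E n)) atTop (𝓝 0)) :
    Tendsto (fun n => smallNorm μ ψ a b ((E n).indicator g)) atTop (𝓝 0) :=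
  smallNorm_absolutely_continuous_general μ a b ha ψ hψpos g hgS E hEm hE0

end
end

section
/- Let (X,Σ,μ) be a σ-finite nonatomic measure space, 1 ≤ a < b ≤ ∞, and let ψ : (a,b) → (0,∞) be continuous with inf_{p∈(a,b)} ψ(p) > 0 and with lim_{p→a+} ψ(p) = ∞ or lim_{p→b−} ψ(p) = ∞. Then for every A ∈ Σ with 0 < μ(A) < ∞, ‖1_A‖_{SL(ψ)} = μ(A) / ( sup_{p∈(a,b)} μ(A)^{1/p}/ψ(p) ); i.e. the fundamental function of SL(ψ) equals δ/φ(G(ψ),δ). -/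
/-!
The one-term decomposition `1_A = 1_A` with exponent `p` costs `ψ(p) μ(A)^{1 - 1/p}`, which is
`μ(A) / (μ(A)^{1/p} / ψ(p))`; optimizing over `p` gives `‖1_A‖_{SL(ψ)} ≤ μ(A) / φ(G(ψ), μ(A))`.
Conversely, Hölder's inequality applied term by term shows `∫ |g h| ≤ cost(d) ‖h‖_{G(ψ)}` for
every decomposition `d` of `g`; for `g = h = 1_A` the left side is `μ(A)` and
`‖1_A‖_{G(ψ)} = φ(G(ψ), μ(A))`.
-/

open MeasureTheory Filter Set
open scoped ENNReal Topology NNReal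

noncomputable section

section

variable {X : Type*} [MeasurableSpace X] (μ : Measure X)

lemma lpNorm_zero {r : ℝ} (hr : 0 < r) : lpNorm μ (0 : X → ℝ) r = 0 := by
  simp [_root_.lpNorm, Real.zero_rpow hr.ne', hr]

lemma lpNorm_indicator_one {A : Set X} (hA : MeasurableSet A) {r : ℝ} (hr : 0 < r) :
    lpNorm μ (A.indicator fun _ => (1 : ℝ)) r = μ A ^ (1 / r) := by
  have : (fun x => ENNReal.ofReal (|A.indicator (fun _ => (1 : ℝ)) x| ^ r)) = A.indicator 1 := by
    ext x
    by_cases hx : x ∈ A <;> simp [hx, Real.zero_rpow hr.ne']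
  rw [_root_.lpNorm, this, lintegral_indicator_one hA]

lemma lpNorm_eq_lintegral_ofReal_abs_rpow (f : X → ℝ) {r : ℝ} (hr : 0 ≤ r) :
    lpNorm μ f r = (∫⁻ x, ENNReal.ofReal |f x| ^ r ∂μ) ^ (1 / r) := by
  simp only [_root_.lpNorm, ENNReal.ofReal_rpow_of_nonneg (abs_nonneg _) hr]

lemma lintegral_mul_le_lpNorm_mul_lpNorm {p q : ℝ} (hpq : p.HolderConjugate q) {f g : X → ℝ}
    (hf : Measurable f) (hg : Measurable g) :
    ∫⁻ x, ENNReal.ofReal |f x| * ENNReal.ofReal |g x| ∂μ ≤ lpNorm μ f p * lpNorm μ g q := by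
  rw [lpNorm_eq_lintegral_ofReal_abs_rpow μ f hpq.nonneg,
    lpNorm_eq_lintegral_ofReal_abs_rpow μ g hpq.symm.nonneg]
  exact ENNReal.lintegral_mul_le_Lp_mul_Lq μ hpq
    hf.abs.ennreal_ofReal.aemeasurable hg.abs.ennreal_ofReal.aemeasurable

end

lemma holderConjugate_conjExp {p : ℝ} (hp : 1 < p) : (conjExp p).HolderConjugate p :=
  (Real.HolderConjugate.conjExponent hp).symm

lemma one_div_conjExp {p : ℝ} (hp : 1 < p) : 1 / conjExp p = 1 - 1 / p := by
  rw [eq_sub_iff_add_eq]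
  exact (holderConjugate_conjExp hp).one_div_add_one_div.trans one_div_one

section

variable {X : Type*} [MeasurableSpace X] {μ : Measure X} {a : ℝ} {b : ℝ≥0∞} {A : Set X}

def SLDecomp.single {g : X → ℝ} (hg : Measurable g) {p : ℝ} (hp : p ∈ gIoo a b) :
    SLDecomp μ a b g where
  gk k := if k = 0 then g else 0
  q _ := p
  meas k := by
    split_ifs
    exacts [hg, measurable_zero]
  mem _ := hp
  sum := .of_forall fun x => by
    simpa only [apply_ite (fun f : X → ℝ => f x), Pi.zero_apply] using hasSum_ite_eq 0 (g x)

lemma SLDecomp.cost_single {g : X → ℝ} (hg : Measurable g) {p : ℝ} (hp : p ∈ gIoo a b)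
    (hp1 : 1 < p) (ψ : ℝ → ℝ) :
    (SLDecomp.single (μ := μ) hg hp).cost ψ = ENNReal.ofReal (ψ p) * lpNorm μ g (conjExp p) := by
  rw [SLDecomp.cost, tsum_eq_single 0 fun k hk => ?_]
  · simp [SLDecomp.single]
  · simp [SLDecomp.single, hk, lpNorm_zero μ (holderConjugate_conjExp hp1).pos]

lemma smallNorm_le_of_mem {g : X → ℝ} (hg : Measurable g) {p : ℝ} (hp : p ∈ gIoo a b)
    (hp1 : 1 < p) (ψ : ℝ → ℝ) :
    smallNorm μ ψ a b g ≤ ENNReal.ofReal (ψ p) * lpNorm μ g (conjExp p) :=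
  (iInf_le _ (SLDecomp.single hg hp)).trans_eq (SLDecomp.cost_single hg hp hp1 ψ)

lemma lpNorm_le_mul_grandNorm {ψ : ℝ → ℝ} {p : ℝ} (hp : p ∈ gIoo a b) (hψ : 0 < ψ p)
    (f : X → ℝ) : lpNorm μ f p ≤ ENNReal.ofReal (ψ p) * grandNorm μ ψ a b f := by
  rw [mul_comm, ← ENNReal.div_le_iff_le_mul (Or.inl (ENNReal.ofReal_pos.2 hψ).ne')
    (Or.inl ENNReal.ofReal_ne_top)]
  exact le_iSup₂ (f := fun p (_ : p ∈ gIoo a b) => lpNorm μ f p / ENNReal.ofReal (ψ p)) p hp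

lemma SLDecomp.lintegral_mul_le_cost_mul_grandNorm (ha : 1 ≤ a) {ψ : ℝ → ℝ}
    (hψ : ∀ p ∈ gIoo a b, 0 < ψ p) {g h : X → ℝ} (d : SLDecomp μ a b g) (hh : Measurable h) :
    ∫⁻ x, ENNReal.ofReal |g x| * ENNReal.ofReal |h x| ∂μ ≤ d.cost ψ * grandNorm μ ψ a b h := by
  have hq1 (k : ℕ) : 1 < d.q k := ha.trans_lt (d.mem k).1
  have hg_le : ∀ᵐ x ∂μ, ENNReal.ofReal |g x| ≤ ∑' k, ENNReal.ofReal |d.gk k x| := by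
    filter_upwards [d.sum] with x hx
    simpa only [hx.tsum_eq, Real.enorm_eq_ofReal_abs] using
      enorm_tsum_le_tsum_enorm (f := fun k => d.gk k x)
  calc ∫⁻ x, ENNReal.ofReal |g x| * ENNReal.ofReal |h x| ∂μ
      ≤ ∫⁻ x, (∑' k, ENNReal.ofReal |d.gk k x|) * ENNReal.ofReal |h x| ∂μ :=
        lintegral_mono_ae (hg_le.mono fun x hx => by gcongr)
    _ = ∑' k, ∫⁻ x, ENNReal.ofReal |d.gk k x| * ENNReal.ofReal |h x| ∂μ := by
        simp_rw [← ENNReal.tsum_mul_right]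
        exact lintegral_tsum fun k =>
          ((d.meas k).abs.ennreal_ofReal.mul hh.abs.ennreal_ofReal).aemeasurable
    _ ≤ ∑' k, lpNorm μ (d.gk k) (conjExp (d.q k)) * lpNorm μ h (d.q k) :=
        ENNReal.tsum_le_tsum fun k => lintegral_mul_le_lpNorm_mul_lpNorm μ
          (holderConjugate_conjExp (hq1 k)) (d.meas k) hh
    _ ≤ ∑' k, lpNorm μ (d.gk k) (conjExp (d.q k)) *
          (ENNReal.ofReal (ψ (d.q k)) * grandNorm μ ψ a b h) := by
        gcongr with k
        exact lpNorm_le_mul_grandNorm (d.mem k) (hψ _ (d.mem k)) h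
    _ = d.cost ψ * grandNorm μ ψ a b h := by
        rw [SLDecomp.cost, ← ENNReal.tsum_mul_right]
        congr 1 with k
        ring

lemma grandNorm_indicator_one (ha : 0 ≤ a) (ψ : ℝ → ℝ) (hA : MeasurableSet A) :
    grandNorm μ ψ a b (A.indicator fun _ => (1 : ℝ)) = fund ψ a b (μ A) :=
  iSup_congr fun p => iSup_congr fun hp => by rw [lpNorm_indicator_one μ hA (ha.trans_lt hp.1)]

lemma div_fund_le_smallNorm_indicator (ha : 1 ≤ a) {ψ : ℝ → ℝ} (hψ : ∀ p ∈ gIoo a b, 0 < ψ p)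
    (hA : MeasurableSet A) :
    μ A / fund ψ a b (μ A) ≤ smallNorm μ ψ a b (A.indicator fun _ => (1 : ℝ)) := by
  have h1A : Measurable (A.indicator fun _ => (1 : ℝ)) := measurable_const.indicator hA
  have hsq : (fun x => ENNReal.ofReal |A.indicator (fun _ => (1 : ℝ)) x| *
      ENNReal.ofReal |A.indicator (fun _ => (1 : ℝ)) x|) = A.indicator 1 := by
    ext x
    by_cases hx : x ∈ A <;> simp [hx]
  refine le_iInf fun d => ENNReal.div_le_of_le_mul ?_
  calc μ A = ∫⁻ x, ENNReal.ofReal |A.indicator (fun _ => (1 : ℝ)) x| *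
        ENNReal.ofReal |A.indicator (fun _ => (1 : ℝ)) x| ∂μ := by
        rw [hsq, lintegral_indicator_one hA]
    _ ≤ d.cost ψ * grandNorm μ ψ a b (A.indicator fun _ => (1 : ℝ)) :=
        d.lintegral_mul_le_cost_mul_grandNorm ha hψ h1A
    _ = d.cost ψ * fund ψ a b (μ A) := by
        rw [grandNorm_indicator_one (zero_le_one.trans ha) ψ hA]

lemma smallNorm_indicator_le_div_fund (ha : 1 ≤ a) (ψ : ℝ → ℝ) (hA : MeasurableSet A)
    (hA0 : μ A ≠ 0) (hAtop : μ A ≠ ⊤) :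
    smallNorm μ ψ a b (A.indicator fun _ => (1 : ℝ)) ≤ μ A / fund ψ a b (μ A) := by
  rw [ENNReal.le_div_iff_mul_le (Or.inr hA0) (Or.inr hAtop), fund, ENNReal.mul_iSup]
  refine iSup_le fun p => ?_
  rw [ENNReal.mul_iSup]
  refine iSup_le fun hp => ?_
  have hp1 : 1 < p := ha.trans_lt hp.1
  calc smallNorm μ ψ a b (A.indicator fun _ => (1 : ℝ)) * (μ A ^ (1 / p) / ENNReal.ofReal (ψ p))
      ≤ ENNReal.ofReal (ψ p) * μ A ^ (1 - 1 / p) * (μ A ^ (1 / p) / ENNReal.ofReal (ψ p)) := by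
        gcongr
        rw [← one_div_conjExp hp1, ← lpNorm_indicator_one μ hA (holderConjugate_conjExp hp1).pos]
        exact smallNorm_le_of_mem (measurable_const.indicator hA) hp hp1 ψ
    _ = μ A ^ (1 - 1 / p + 1 / p) * (ENNReal.ofReal (ψ p) / ENNReal.ofReal (ψ p)) := by
        simp only [ENNReal.rpow_add _ _ hA0 hAtop, div_eq_mul_inv]
        ring
    _ ≤ μ A := by
        rw [sub_add_cancel, ENNReal.rpow_one]
        exact mul_le_of_le_one_right' ENNReal.div_self_le_one

end

theorem smallNorm_indicator_general {X : Type*} [MeasurableSpace X] (μ : Measure X)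
    (a : ℝ) (b : ℝ≥0∞) (ha : 1 ≤ a)
    (ψ : ℝ → ℝ)
    (hψinf : ∃ c : ℝ, 0 < c ∧ ∀ p ∈ gIoo a b, c ≤ ψ p)
    (A : Set X) (hA : MeasurableSet A) (hA0 : 0 < μ A) (hAfin : μ A < ⊤) :
    smallNorm μ ψ a b (A.indicator fun _ => (1 : ℝ)) =
      μ A / ⨆ p ∈ gIoo a b, μ A ^ (1 / p) / ENNReal.ofReal (ψ p) := by
  obtain ⟨c, hc, hcψ⟩ := hψinf
  exact le_antisymm (smallNorm_indicator_le_div_fund ha ψ hA hA0.ne' hAfin.ne)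
    (div_fund_le_smallNorm_indicator ha (fun p hp => hc.trans_le (hcψ p hp)) hA)

/-- The fundamental function of the Small Lebesgue space: for any measurable `A` with
`0 < μ(A) < ∞`, `‖1_A‖_{SL(ψ)} = μ(A)/φ(G(ψ), μ(A))`. -/
theorem smallNorm_indicator {X : Type*} [MeasurableSpace X] (μ : Measure X)
    [SigmaFinite μ] (hμ : IsNonatomic μ)
    (a : ℝ) (b : ℝ≥0∞) (ha : 1 ≤ a) (hab : ENNReal.ofReal a < b)
    (ψ : ℝ → ℝ) (hψc : ContinuousOn ψ (gIoo a b))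
    (hψinf : ∃ c : ℝ, 0 < c ∧ ∀ p ∈ gIoo a b, c ≤ ψ p)
    (hψblow : Tendsto ψ (𝓝[>] a) atTop ∨ Tendsto ψ (rightEndFilter b) atTop)
    (A : Set X) (hA : MeasurableSet A) (hA0 : 0 < μ A) (hAfin : μ A < ⊤) :
    smallNorm μ ψ a b (A.indicator fun _ => (1 : ℝ)) =
      μ A / ⨆ p ∈ gIoo a b, μ A ^ (1 / p) / ENNReal.ofReal (ψ p) :=
  smallNorm_indicator_general μ a b ha ψ hψinf A hA hA0 hAfin

end
end

section
/- Let 1 ≤ a < b < ∞ and α, β > 0. Then, as δ → 0+, sup_{p∈(a,b)} δ^{1/p} · min((p−a)^α, (b−p)^β) is asymptotically equivalent to (β b²/e)^β · δ^{1/b} · |log δ|^{−β}; that is, the ratio of these two quantities tends to 1 as δ → 0+. -/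
open Filter Set
open scoped Topology
open Real

/-!
With `L = |log δ|` we have `δ ^ (1 / p) = exp (-L / p)`. Bounding the weight by `(b - p) ^ β`
and `1 / p` from below by its tangent line at `b` gives
`δ ^ (1 / p) ζ(p) ≤ δ ^ (1 / b) exp (-(L / b²) t) t ^ β` with `t = b - p`, and maximising over
`t` yields the upper bound `(β b² / e) ^ β δ ^ (1 / b) L ^ (-β)`. The maximiser `t = β b² / L`
tends to `0`, so the weight there is eventually `t ^ β`, and the value there is
`exp (β (1 - b / (b - t)))` times the upper bound, a factor tending to `1`.
-/

noncomputable def fundamentalFunction (a b α β δ : ℝ) : ℝ :=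
  sSup ((fun p : ℝ => δ ^ (1 / p) * min ((p - a) ^ α) ((b - p) ^ β)) '' Ioo a b)

noncomputable def fundamentalAsymptote (b β δ : ℝ) : ℝ :=
  (β * b ^ 2 / exp 1) ^ β * δ ^ (1 / b) * |log δ| ^ (-β)

lemma fundamentalAsymptote_pos {b β δ : ℝ} (hb : 0 < b) (hβ : 0 < β) (hδ₀ : 0 < δ)
    (hδ₁ : δ < 1) :
    0 < fundamentalAsymptote b β δ := by
  have := abs_pos.2 (log_neg hδ₀ hδ₁).ne
  unfold fundamentalAsymptote
  positivity

lemma Real.exp_neg_mul_mul_rpow_le {β c t : ℝ} (hβ : 0 < β) (hc : 0 < c) (ht : 0 ≤ t) :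
    exp (-(c * t)) * t ^ β ≤ (β / (c * exp 1)) ^ β := by
  set u := c * t / β
  have hu : 0 ≤ u := by positivity
  have hu_le : u ^ β ≤ exp (c * t - β) := calc
    u ^ β ≤ exp (u - 1) ^ β := rpow_le_rpow hu (by linarith [add_one_le_exp (u - 1)]) hβ.le
    _ = exp (c * t - β) := by rw [← exp_mul, sub_mul, div_mul_cancel₀ _ hβ.ne', one_mul]
  have ht_eq : t = β / c * u := by simp only [u]; field_simp
  calc exp (-(c * t)) * t ^ β = (β / c) ^ β * (exp (-(c * t)) * u ^ β) := by
        rw [ht_eq, mul_rpow (by positivity) hu, ← ht_eq]; ring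
    _ ≤ (β / c) ^ β * (exp (-(c * t)) * exp (c * t - β)) := by gcongr
    _ = (β / (c * exp 1)) ^ β := by
        rw [← exp_add, div_mul_eq_div_div, div_rpow (by positivity) (exp_pos 1).le,
          exp_one_rpow, div_eq_mul_inv _ (exp β), ← exp_neg]
        ring_nf

/-- The tangent line of `x ↦ 1 / x` at `b` lies below its graph. -/
lemma one_div_add_sub_div_sq_le_one_div {b q : ℝ} (hb : 0 < b) (hq : 0 < q) :
    1 / b + (b - q) / b ^ 2 ≤ 1 / q := by
  rw [div_add_div _ _ hb.ne' (by positivity), div_le_div_iff₀ (by positivity) hq]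
  nlinarith [mul_nonneg hb.le (sq_nonneg (b - q))]

lemma rpow_one_div_mul_rpow_sub_le_fundamentalAsymptote {δ b q β : ℝ} (hδ₀ : 0 < δ)
    (hδ₁ : δ < 1) (hq : 0 < q) (hqb : q ≤ b) (hβ : 0 < β) :
    δ ^ (1 / q) * (b - q) ^ β ≤ fundamentalAsymptote b β δ := by
  have hb : 0 < b := hq.trans_le hqb
  have hL : 0 < |log δ| := abs_pos.2 (log_neg hδ₀ hδ₁).ne
  have hδ_tangent : δ ^ (1 / q) ≤ δ ^ (1 / b) * exp (-(|log δ| / b ^ 2 * (b - q))) := by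
    rw [show exp (-(|log δ| / b ^ 2 * (b - q))) = δ ^ ((b - q) / b ^ 2) by
      rw [rpow_def_of_pos hδ₀, abs_of_neg (log_neg hδ₀ hδ₁)]; ring_nf, ← rpow_add hδ₀]
    exact rpow_le_rpow_of_exponent_ge hδ₀ hδ₁.le (one_div_add_sub_div_sq_le_one_div hb hq)
  have hmax := exp_neg_mul_mul_rpow_le hβ (div_pos hL (pow_pos hb 2)) (sub_nonneg.2 hqb)
  calc δ ^ (1 / q) * (b - q) ^ β
      ≤ δ ^ (1 / b) * exp (-(|log δ| / b ^ 2 * (b - q))) * (b - q) ^ β := by gcongr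
    _ ≤ δ ^ (1 / b) * (β / (|log δ| / b ^ 2 * exp 1)) ^ β := by
        rw [mul_assoc]; exact mul_le_mul_of_nonneg_left hmax (by positivity)
    _ = fundamentalAsymptote b β δ := by
        rw [fundamentalAsymptote,
          show β / (|log δ| / b ^ 2 * exp 1) = β * b ^ 2 / exp 1 * |log δ|⁻¹ by field_simp,
          mul_rpow (by positivity) (by positivity), inv_rpow hL.le, rpow_neg hL.le]
        ring

lemma fundamentalAsymptote_mem_upperBounds {a b α β δ : ℝ} (ha : 0 ≤ a) (hβ : 0 < β)
    (hδ₀ : 0 < δ) (hδ₁ : δ < 1) :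
    fundamentalAsymptote b β δ ∈
      upperBounds ((fun p : ℝ => δ ^ (1 / p) * min ((p - a) ^ α) ((b - p) ^ β)) '' Ioo a b) := by
  rintro _ ⟨q, ⟨haq, hqb⟩, rfl⟩
  calc δ ^ (1 / q) * min ((q - a) ^ α) ((b - q) ^ β) ≤ δ ^ (1 / q) * (b - q) ^ β := by
        gcongr; exact min_le_right _ _
    _ ≤ _ := rpow_one_div_mul_rpow_sub_le_fundamentalAsymptote hδ₀ hδ₁ (ha.trans_lt haq) hqb.le hβ

lemma fundamentalFunction_le_fundamentalAsymptote {a b α β δ : ℝ} (ha : 0 ≤ a) (hab : a < b)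
    (hβ : 0 < β) (hδ₀ : 0 < δ) (hδ₁ : δ < 1) :
    fundamentalFunction a b α β δ ≤ fundamentalAsymptote b β δ :=
  csSup_le ((nonempty_Ioo.2 hab).image _) (fundamentalAsymptote_mem_upperBounds ha hβ hδ₀ hδ₁)

lemma rpow_one_div_sub_mul_rpow_eq {δ b β s : ℝ} (hδ₀ : 0 < δ) (hδ₁ : δ < 1) (hβ : 0 < β)
    (hs : s = β * b ^ 2 / |log δ|) (hsb : s < b) :
    δ ^ (1 / (b - s)) * s ^ β = exp (β * (1 - b / (b - s))) * fundamentalAsymptote b β δ := by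
  have hL : 0 < |log δ| := abs_pos.2 (log_neg hδ₀ hδ₁).ne
  have hs_pow : s ^ β = (β * b ^ 2 / exp 1) ^ β * exp β * |log δ| ^ (-β) := by
    rw [show s = β * b ^ 2 / exp 1 * (exp 1 / |log δ|) by rw [hs]; field_simp,
      mul_rpow (by positivity) (by positivity), div_rpow (exp_pos 1).le hL.le, exp_one_rpow,
      rpow_neg hL.le]
    ring
  have hexp : log δ * (1 / (b - s)) + β = β * (1 - b / (b - s)) + log δ * (1 / b) := by
    have hb : 0 < b := by rw [hs] at hsb; exact lt_of_le_of_lt (by positivity) hsb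
    have hsL : s * |log δ| = β * b ^ 2 := by rw [hs]; field_simp
    rw [← neg_neg (log δ), ← abs_of_neg (log_neg hδ₀ hδ₁)]
    field_simp [(sub_pos.2 hsb).ne']
    linear_combination (-1) * hsL
  rw [fundamentalAsymptote, hs_pow, rpow_def_of_pos hδ₀, rpow_def_of_pos hδ₀]
  calc exp (log δ * (1 / (b - s))) * ((β * b ^ 2 / exp 1) ^ β * exp β * |log δ| ^ (-β))
      = exp (log δ * (1 / (b - s)) + β) * ((β * b ^ 2 / exp 1) ^ β * |log δ| ^ (-β)) := by
        rw [exp_add]; ring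
    _ = _ := by rw [hexp, exp_add]; ring

lemma exp_mul_fundamentalAsymptote_le_fundamentalFunction {a b α β δ s : ℝ} (ha : 0 ≤ a)
    (hβ : 0 < β) (hδ₀ : 0 < δ) (hδ₁ : δ < 1) (hs : s = β * b ^ 2 / |log δ|) (hsa : s < b - a)
    (hweight : s ^ β ≤ (b - s - a) ^ α) :
    exp (β * (1 - b / (b - s))) * fundamentalAsymptote b β δ ≤
      fundamentalFunction a b α β δ := by
  have hb : 0 < b := by linarith [show 0 ≤ s by rw [hs]; positivity]
  have hs₀ : 0 < s := by rw [hs]; exact div_pos (by positivity) (abs_pos.2 (log_neg hδ₀ hδ₁).ne)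
  rw [← rpow_one_div_sub_mul_rpow_eq hδ₀ hδ₁ hβ hs (by linarith)]
  refine le_csSup ⟨_, fundamentalAsymptote_mem_upperBounds ha hβ hδ₀ hδ₁⟩
    ⟨b - s, ⟨by linarith, by linarith⟩, ?_⟩
  dsimp only
  rw [sub_sub_cancel, min_eq_right hweight]

theorem fund_asymptotics_zero_general (a b α β : ℝ) (ha : 1 ≤ a) (hab : a < b)
    (hβ : 0 < β) :
    Tendsto (fun δ : ℝ =>
        sSup ((fun p : ℝ => δ ^ (1 / p) * min ((p - a) ^ α) ((b - p) ^ β)) '' Set.Ioo a b) /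
          ((β * b ^ 2 / Real.exp 1) ^ β * δ ^ (1 / b) * |Real.log δ| ^ (-β)))
      (𝓝[>] 0) (𝓝 1) := by
  show Tendsto (fun δ => fundamentalFunction a b α β δ / fundamentalAsymptote b β δ) _ _
  have ha₀ : 0 ≤ a := by linarith
  have hb : 0 < b := by linarith
  set s : ℝ → ℝ := fun δ => β * b ^ 2 / |log δ|
  have hs : Tendsto s (𝓝[>] 0) (𝓝 0) :=
    tendsto_const_nhds.div_atTop (tendsto_abs_atBot_atTop.comp tendsto_log_nhdsGT_zero)
  have hratio : Tendsto (fun δ => exp (β * (1 - b / (b - s δ)))) (𝓝[>] 0) (𝓝 1) := by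
    have hcont : ContinuousAt (fun x => exp (β * (1 - b / (b - x)))) 0 := by
      fun_prop (disch := simp [hb.ne'])
    have h := hcont.tendsto.comp hs
    rwa [sub_zero, div_self hb.ne', sub_self, mul_zero, exp_zero] at h
  have hweight : ∀ᶠ δ in 𝓝[>] 0, s δ ^ β < (b - s δ - a) ^ α :=
    (hs.rpow_const (Or.inr hβ.le)).eventually_lt
      (((tendsto_const_nhds.sub hs).sub tendsto_const_nhds).rpow_const
        (Or.inl (by rw [sub_zero]; exact (sub_pos.2 hab).ne')))
      (by rw [zero_rpow hβ.ne', sub_zero]; exact rpow_pos_of_pos (sub_pos.2 hab) α)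
  have hδ : ∀ᶠ δ in 𝓝[>] (0 : ℝ), δ ∈ Ioo 0 1 := Ioo_mem_nhdsGT one_pos
  refine tendsto_of_tendsto_of_tendsto_of_le_of_le' hratio tendsto_const_nhds ?_ ?_
  · filter_upwards [hδ, hweight, hs.eventually_lt_const (sub_pos.2 hab)] with δ ⟨hδ₀, hδ₁⟩ hw hsa
    rw [le_div_iff₀ (fundamentalAsymptote_pos hb hβ hδ₀ hδ₁)]
    exact exp_mul_fundamentalAsymptote_le_fundamentalFunction ha₀ hβ hδ₀ hδ₁ rfl hsa hw.le
  · filter_upwards [hδ] with δ ⟨hδ₀, hδ₁⟩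
    rw [div_le_one (fundamentalAsymptote_pos hb hβ hδ₀ hδ₁)]
    exact fundamentalFunction_le_fundamentalAsymptote ha₀ hab hβ hδ₀ hδ₁

/-- Asymptotics of the fundamental function of `G(a,b;α,β)` as `δ → 0+`:
`sup_{p∈(a,b)} δ^{1/p} min((p-a)^α, (b-p)^β) ∼ (βb²/e)^β δ^{1/b} |log δ|^{-β}`. -/
theorem fund_asymptotics_zero (a b α β : ℝ) (ha : 1 ≤ a) (hab : a < b)
    (hα : 0 < α) (hβ : 0 < β) :
    Tendsto (fun δ : ℝ =>
        sSup ((fun p : ℝ => δ ^ (1 / p) * min ((p - a) ^ α) ((b - p) ^ β)) '' Set.Ioo a b) /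
          ((β * b ^ 2 / Real.exp 1) ^ β * δ ^ (1 / b) * |Real.log δ| ^ (-β)))
      (𝓝[>] 0) (𝓝 1) :=
  fund_asymptotics_zero_general a b α β ha hab hβ
end

section
/- Let 1 ≤ a < b < ∞ and α, β > 0. Then, as δ → ∞, sup_{p∈(a,b)} δ^{1/p} · min((p−a)^α, (b−p)^β) is asymptotically equivalent to (a² α/e)^α · δ^{1/a} · (log δ)^{−α}; that is, the ratio of these two quantities tends to 1 as δ → ∞. -/
open Filter Set
open scoped Topology

/-!
Write `L = log δ` and `u = L (p - a) / (a² α)`. Then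
`δ^{1/p} (p - a)^α = (u · e^{1 - a u / p})^α · (a² α / e)^α δ^{1/a} L^{-α}`.
Since `u e^{1 - s u} ≤ 1/s`, for `a < p ≤ a + η` the first factor is at most `((a + η)/a)^α`,
while `u = 1`, i.e. `p = a + a² α / L`, gives `e^{α (1 - a/p)} → 1`; near `p = a` the weight
is `(p - a)^α`. For `p > a + η` the term is `O(δ^{1/(a+η)})`, negligible against `δ^{1/a} L^{-α}`.
-/

open Real

namespace GrandLebesgue

noncomputable def weight (a b α β p : ℝ) : ℝ := min ((p - a) ^ α) ((b - p) ^ β)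

noncomputable def fundamental (a b α β δ : ℝ) : ℝ :=
  sSup ((fun p => δ ^ (1 / p) * weight a b α β p) '' Ioo a b)

noncomputable def fundamentalAsymp (a α δ : ℝ) : ℝ :=
  (a ^ 2 * α / exp 1) ^ α * δ ^ (1 / a) * log δ ^ (-α)

lemma mul_exp_one_sub_mul_le {s : ℝ} (hs : 0 < s) (u : ℝ) : u * exp (1 - s * u) ≤ s⁻¹ := by
  rw [← mul_one s⁻¹, le_inv_mul_iff₀ hs, ← mul_assoc]
  calc s * u * exp (1 - s * u) ≤ exp (s * u - 1) * exp (1 - s * u) := by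
        gcongr; linarith [add_one_le_exp (s * u - 1)]
    _ = 1 := by rw [← exp_add]; simp

variable {a b α β δ : ℝ}

lemma fundamentalAsymp_pos (ha : 0 < a) (hα : 0 < α) (hδ : 1 < δ) :
    0 < fundamentalAsymp a α δ := by
  have := log_pos hδ
  unfold fundamentalAsymp
  positivity

lemma rpow_one_div_mul_sub_rpow_div_fundamentalAsymp {p : ℝ} (ha : 0 < a) (hα : 0 < α)
    (hδ : 1 < δ) (hap : a ≤ p) :
    δ ^ (1 / p) * (p - a) ^ α / fundamentalAsymp a α δ =
      (log δ * (p - a) / (a ^ 2 * α) *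
        exp (1 - a * (log δ * (p - a) / (a ^ 2 * α)) / p)) ^ α := by
  have hL := log_pos hδ
  have hp : 0 < p := ha.trans_le hap
  rw [mul_rpow (by positivity) (exp_pos _).le, ← exp_mul, div_rpow (by positivity) (by positivity),
    mul_rpow hL.le (by linarith), fundamentalAsymp, div_rpow (by positivity) (exp_pos _).le,
    exp_one_rpow, rpow_def_of_pos (by linarith : 0 < δ), rpow_def_of_pos (by linarith : 0 < δ),
    rpow_neg hL.le]
  have hK : 0 < (a ^ 2 * α) ^ α := by positivity
  have hLα : 0 < log δ ^ α := by positivity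
  have hexp : exp (log δ * (1 / p)) =
      exp ((1 - a * (log δ * (p - a) / (a ^ 2 * α)) / p) * α) * exp (log δ * (1 / a)) /
        exp α := by
    rw [← exp_add, ← exp_sub]; congr 1; field_simp; ring
  rw [hexp]
  field_simp

lemma rpow_one_div_mul_sub_rpow_le {p η : ℝ} (ha : 0 < a) (hα : 0 < α) (hδ : 1 < δ)
    (hap : a ≤ p) (hpη : p ≤ a + η) :
    δ ^ (1 / p) * (p - a) ^ α ≤ ((a + η) / a) ^ α * fundamentalAsymp a α δ := by
  rw [← div_le_iff₀ (fundamentalAsymp_pos ha hα hδ),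
    rpow_one_div_mul_sub_rpow_div_fundamentalAsymp ha hα hδ hap]
  set u := log δ * (p - a) / (a ^ 2 * α)
  have hu : 0 ≤ u := by
    have := log_pos hδ
    have : 0 ≤ p - a := by linarith
    positivity
  have hp : 0 < p := by linarith
  have hs : a / (a + η) ≤ a / p := div_le_div_of_nonneg_left ha.le hp hpη
  calc (u * exp (1 - a * u / p)) ^ α ≤ (u * exp (1 - a / (a + η) * u)) ^ α := by
        gcongr
        rw [mul_div_right_comm]
        gcongr
    _ ≤ ((a / (a + η))⁻¹) ^ α := by
        gcongr
        exact mul_exp_one_sub_mul_le (div_pos ha (by linarith)) u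
    _ = ((a + η) / a) ^ α := by rw [inv_div]

lemma tendsto_rpow_one_div_div_fundamentalAsymp {q : ℝ} (ha : 0 < a) (hα : 0 < α)
    (haq : a < q) :
    Tendsto (fun δ => δ ^ (1 / q) / fundamentalAsymp a α δ) atTop (𝓝 0) := by
  have hr : 0 < 1 / a - 1 / q := sub_pos.2 (one_div_lt_one_div_of_lt ha haq)
  have h := ((isLittleO_log_rpow_rpow_atTop α hr).tendsto_div_nhds_zero).const_mul
    ((a ^ 2 * α / exp 1) ^ α)⁻¹
  rw [mul_zero] at h
  refine h.congr' ?_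
  filter_upwards [eventually_gt_atTop 1] with δ hδ
  have hL := log_pos hδ
  have hδ0 : 0 < δ := by linarith
  rw [fundamentalAsymp, rpow_neg hL.le, rpow_sub hδ0]
  have : 0 < δ ^ (1 / q) := by positivity
  have : 0 < δ ^ (1 / a) := by positivity
  have : 0 < log δ ^ α := by positivity
  have : 0 < (a ^ 2 * α / exp 1) ^ α := by positivity
  field_simp

lemma weight_eventually_eq (hα : 0 < α) (hab : a < b) :
    ∀ᶠ p in 𝓝 a, weight a b α β p = (p - a) ^ α := by
  have hleft : Tendsto (fun p => (p - a) ^ α) (𝓝 a) (𝓝 0) :=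
    (tendsto_sub_nhds_zero_iff.2 tendsto_id).rpow_const_nhds_zero hα
  have hright : Tendsto (fun p => (b - p) ^ β) (𝓝 a) (𝓝 ((b - a) ^ β)) :=
    (tendsto_const_nhds.sub tendsto_id).rpow_const (.inl (sub_pos.2 hab).ne')
  have hpos : 0 < (b - a) ^ β := rpow_pos_of_pos (sub_pos.2 hab) β
  exact (hleft.eventually_lt hright hpos).mono fun p hp => min_eq_left hp.le

lemma rpow_one_div_mul_weight_le_max {p η : ℝ} (ha : 0 < a) (hα : 0 < α) (hδ : 1 < δ)
    (hη : 0 < η) (hp : p ∈ Ioo a b) :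
    δ ^ (1 / p) * weight a b α β p ≤
      max (((a + η) / a) ^ α * fundamentalAsymp a α δ) ((b - a) ^ α * δ ^ (1 / (a + η))) := by
  have hpa : 0 ≤ p - a := by linarith [hp.1]
  have hbp : 0 ≤ b - p := by linarith [hp.2]
  have hw₀ : 0 ≤ weight a b α β p := le_min (by positivity) (by positivity)
  have hw : weight a b α β p ≤ (p - a) ^ α := min_le_left _ _
  have hδp : 0 ≤ δ ^ (1 / p) := by positivity
  rcases le_or_gt p (a + η) with hnear | hfar
  · exact le_max_of_le_left ((mul_le_mul_of_nonneg_left hw hδp).trans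
      (rpow_one_div_mul_sub_rpow_le ha hα hδ hp.1.le hnear))
  · refine le_max_of_le_right ?_
    rw [mul_comm ((b - a) ^ α)]
    exact mul_le_mul
      (rpow_le_rpow_of_exponent_le hδ.le (one_div_le_one_div_of_le (by linarith) hfar.le))
      (hw.trans (rpow_le_rpow hpa (by linarith [hp.2]) hα.le)) hw₀ (by positivity)

lemma bddAbove_image_rpow_one_div_mul_weight (ha : 0 < a) (hα : 0 < α) (hδ : 1 < δ) :
    BddAbove ((fun p => δ ^ (1 / p) * weight a b α β p) '' Ioo a b) :=
  ⟨_, forall_mem_image.2 fun _ hp => rpow_one_div_mul_weight_le_max (β := β) ha hα hδ one_pos hp⟩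

lemma eventually_lt_fundamental_div (ha : 0 < a) (hα : 0 < α) (hab : a < b) {c : ℝ}
    (hc : c < 1) :
    ∀ᶠ δ in atTop, c < fundamental a b α β δ / fundamentalAsymp a α δ := by
  set p : ℝ → ℝ := fun δ => a + a ^ 2 * α / log δ
  have hp : Tendsto p atTop (𝓝 a) := by
    simpa using tendsto_const_nhds.add (tendsto_const_nhds.div_atTop tendsto_log_atTop)
  have hratio : Tendsto (fun δ => exp (1 - a / p δ) ^ α) atTop (𝓝 1) := by
    have h : Tendsto (fun δ => 1 - a / p δ) atTop (𝓝 (1 - a / a)) :=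
      tendsto_const_nhds.sub (tendsto_const_nhds.div hp ha.ne')
    rw [div_self ha.ne', sub_self] at h
    simpa using h.rexp.rpow_const (.inr hα.le)
  filter_upwards [eventually_gt_atTop 1, hp.eventually (weight_eventually_eq (β := β) hα hab),
    hp.eventually (gt_mem_nhds hab), hratio.eventually (lt_mem_nhds hc)] with δ hδ hw hpb hlt
  have hL := log_pos hδ
  have hpa : a < p δ := lt_add_of_pos_right _ (by positivity)
  have hu : log δ * (p δ - a) / (a ^ 2 * α) = 1 := by
    simp only [p, add_sub_cancel_left]
    field_simp
  calc c < exp (1 - a / p δ) ^ α := hlt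
    _ = δ ^ (1 / p δ) * weight a b α β (p δ) / fundamentalAsymp a α δ := by
        rw [hw, rpow_one_div_mul_sub_rpow_div_fundamentalAsymp ha hα hδ hpa.le, hu, one_mul,
          mul_one]
    _ ≤ fundamental a b α β δ / fundamentalAsymp a α δ :=
        div_le_div_of_nonneg_right
          (le_csSup (bddAbove_image_rpow_one_div_mul_weight ha hα hδ) ⟨p δ, ⟨hpa, hpb⟩, rfl⟩)
          (fundamentalAsymp_pos ha hα hδ).le

lemma eventually_fundamental_div_lt (ha : 0 < a) (hα : 0 < α) (hab : a < b) {c : ℝ}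
    (hc : 1 < c) :
    ∀ᶠ δ in atTop, fundamental a b α β δ / fundamentalAsymp a α δ < c := by
  obtain ⟨η, hηc, hη⟩ : ∃ η, ((a + η) / a) ^ α < c ∧ η ∈ Ioi 0 := by
    have h : Tendsto (fun η : ℝ => ((a + η) / a) ^ α) (𝓝 0) (𝓝 1) := by
      have := ((tendsto_const_nhds (x := a)).add (tendsto_id (x := 𝓝 (0 : ℝ)))).div_const a
      simpa [div_self ha.ne'] using this.rpow_const (.inr hα.le)
    exact (((h.eventually (gt_mem_nhds hc)).filter_mono nhdsWithin_le_nhds).and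
      (self_mem_nhdsWithin (s := Ioi 0))).exists
  have hfar := (tendsto_rpow_one_div_div_fundamentalAsymp ha hα
    (lt_add_of_pos_right a hη)).const_mul ((b - a) ^ α)
  rw [mul_zero] at hfar
  filter_upwards [eventually_gt_atTop 1, hfar.eventually (gt_mem_nhds (zero_lt_one.trans hc))]
    with δ hδ hsmall
  have hM := fundamentalAsymp_pos ha hα hδ
  rw [div_lt_iff₀ hM]
  refine (csSup_le ((nonempty_Ioo.2 hab).image _) (forall_mem_image.2 fun p hp =>
    rpow_one_div_mul_weight_le_max ha hα hδ hη hp)).trans_lt (max_lt ?_ ?_)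
  · exact mul_lt_mul_of_pos_right hηc hM
  · rwa [← mul_div_assoc, div_lt_iff₀ hM] at hsmall

end GrandLebesgue

theorem fund_asymptotics_infty_general (a b α β : ℝ) (ha : 1 ≤ a) (hab : a < b)
    (hα : 0 < α) :
    Tendsto (fun δ : ℝ =>
        sSup ((fun p : ℝ => δ ^ (1 / p) * min ((p - a) ^ α) ((b - p) ^ β)) '' Set.Ioo a b) /
          ((a ^ 2 * α / Real.exp 1) ^ α * δ ^ (1 / a) * Real.log δ ^ (-α)))
      atTop (𝓝 1) := by
  have ha₀ : 0 < a := by linarith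
  exact tendsto_order.2
    ⟨fun _ hc => GrandLebesgue.eventually_lt_fundamental_div ha₀ hα hab hc,
      fun _ hc => GrandLebesgue.eventually_fundamental_div_lt ha₀ hα hab hc⟩

/-- Asymptotics of the fundamental function of `G(a,b;α,β)` as `δ → ∞`:
`sup_{p∈(a,b)} δ^{1/p} min((p-a)^α, (b-p)^β) ∼ (a²α/e)^α δ^{1/a} (log δ)^{-α}`. -/
theorem fund_asymptotics_infty (a b α β : ℝ) (ha : 1 ≤ a) (hab : a < b)
    (hα : 0 < α) (hβ : 0 < β) :
    Tendsto (fun δ : ℝ =>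
        sSup ((fun p : ℝ => δ ^ (1 / p) * min ((p - a) ^ α) ((b - p) ^ β)) '' Set.Ioo a b) /
          ((a ^ 2 * α / Real.exp 1) ^ α * δ ^ (1 / a) * Real.log δ ^ (-α)))
      atTop (𝓝 1) :=
  fund_asymptotics_infty_general a b α β ha hab hα
end

section
/- Let a > 0, β > 0 and let δ ∈ (0, e^{−aβ}). Then sup_{p∈(a,∞)} δ^{1/p} · p^{−β} = ( β/(e · |log δ|) )^β, the supremum being attained at p = |log δ|/β. -/
open Filter Set
open scoped Topology

/-! Put `L = |log δ|` and `t = L / (β p)`. Then `δ^{1/p} p^{-β} = (β / L · t e^{-t})^β`, and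
`t e^{-t} ≤ e^{-1}` (from `t ≤ e^{t-1}`) with equality at `t = 1`, i.e. at `p = L / β`. The
hypothesis `δ < e^{-aβ}` says exactly that `L / β > a`. -/

open Real

theorem exp_neg_div_mul_rpow_neg {L β p : ℝ} (hL : 0 < L) (hβ : 0 < β) (hp : 0 < p) :
    exp (-(L / p)) * p ^ (-β) = (β / L * (L / (β * p) * exp (-(L / (β * p))))) ^ β := by
  have h : β / L * (L / (β * p) * exp (-(L / (β * p)))) = p⁻¹ * exp (-(L / (β * p))) := by
    field_simp
  rw [h, mul_rpow (by positivity) (exp_pos _).le, inv_rpow hp.le, ← rpow_neg hp.le, ← exp_mul]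
  field_simp

theorem div_exp_one_mul_eq (β L : ℝ) : β / (exp 1 * L) = β / L * exp (-1) := by
  rw [exp_neg]; field_simp

theorem exp_neg_div_mul_rpow_neg_le {L β p : ℝ} (hL : 0 < L) (hβ : 0 < β) (hp : 0 < p) :
    exp (-(L / p)) * p ^ (-β) ≤ (β / (exp 1 * L)) ^ β := by
  rw [exp_neg_div_mul_rpow_neg hL hβ hp, div_exp_one_mul_eq]
  gcongr
  exact mul_exp_neg_le_exp_neg_one _

theorem exp_neg_div_mul_rpow_neg_at_div {L β : ℝ} (hL : 0 < L) (hβ : 0 < β) :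
    exp (-(L / (L / β))) * (L / β) ^ (-β) = (β / (exp 1 * L)) ^ β := by
  rw [exp_neg_div_mul_rpow_neg hL hβ (div_pos hL hβ), mul_div_cancel₀ L hβ.ne', div_self hL.ne',
    one_mul, div_exp_one_mul_eq]

/-- For `δ ∈ (0, e^{-aβ})`, the fundamental function computation for the weight `p^{-β}`
on `(a,∞)`: the supremum of `δ^{1/p} p^{-β}` over `p ∈ (a,∞)` is attained at
`p = |log δ|/β` and equals `(β/(e·|log δ|))^β`. -/
theorem fund_weight_pow_neg_beta (a β δ : ℝ) (ha : 0 < a) (hβ : 0 < β)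
    (hδ0 : 0 < δ) (hδ : δ < Real.exp (-(a * β))) :
    |Real.log δ| / β ∈ Set.Ioi a ∧
    IsGreatest ((fun p : ℝ => δ ^ (1 / p) * p ^ (-β)) '' Set.Ioi a)
      ((fun p : ℝ => δ ^ (1 / p) * p ^ (-β)) (|Real.log δ| / β)) ∧
    (fun p : ℝ => δ ^ (1 / p) * p ^ (-β)) (|Real.log δ| / β) =
      (β / (Real.exp 1 * |Real.log δ|)) ^ β := by
  set L := |log δ|
  have hlog : log δ < -(a * β) := by simpa using log_lt_log hδ0 hδ
  have hL : L = -log δ := abs_of_neg (hlog.trans (neg_neg_of_pos (mul_pos ha hβ)))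
  have hLa : a * β < L := by linarith
  have hL0 : 0 < L := (mul_pos ha hβ).trans hLa
  have hmem : L / β ∈ Ioi a := (lt_div_iff₀ hβ).2 hLa
  have hδp : ∀ p : ℝ, δ ^ (1 / p) = exp (-(L / p)) := fun p => by
    rw [rpow_def_of_pos hδ0, hL]; ring_nf
  simp only [hδp]
  refine ⟨hmem, ⟨mem_image_of_mem _ hmem, ?_⟩, exp_neg_div_mul_rpow_neg_at_div hL0 hβ⟩
  rintro _ ⟨p, hp, rfl⟩
  rw [exp_neg_div_mul_rpow_neg_at_div hL0 hβ]
  exact exp_neg_div_mul_rpow_neg_le hL0 hβ (ha.trans hp)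
end

section
/- Let α > 0 and 1 ≤ a < h < ∞, and let δ ≥ exp(α h²/(h−a)). Put p₁ = log δ/(2α) − √( (log δ)²/(4α²) − a·log δ/α ). Then p₁ ∈ (a,h] and sup_{p∈(a,h]} δ^{1/p} (p−a)^α = δ^{1/p₁} (p₁ − a)^α. -/
/-!
With `L = log δ`, the objective is `exp (L / p + α log (p - a))`, and the derivative of
`g p = L / p + α log (p - a)` has the sign of `q p = α p² - L p + a L = α (p - p₁) (p - p₂)`.
Since `q a = α a² > 0`, while the hypothesis on `δ` says exactly `q h ≤ 0` and also gives
`L ≥ 4 α a`, i.e. `a < L / (2α)`, the roots satisfy `a < p₁ ≤ h ≤ p₂`. So `g` increases on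
`(a, p₁]` and decreases on `[p₁, h]`.
-/

open Real Set

lemma four_mul_mul_le_of_mul_sq_div_sub_le {α a h L : ℝ} (hα : 0 ≤ α) (hah : a < h)
    (hL : α * h ^ 2 / (h - a) ≤ L) : 4 * α * a ≤ L := by
  have : 4 * a ≤ h ^ 2 / (h - a) := by
    rw [le_div_iff₀ (sub_pos.2 hah)]
    nlinarith [sq_nonneg (h - 2 * a)]
  calc 4 * α * a = α * (4 * a) := by ring
    _ ≤ α * (h ^ 2 / (h - a)) := mul_le_mul_of_nonneg_left this hα
    _ = α * h ^ 2 / (h - a) := (mul_div_assoc _ _ _).symm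
    _ ≤ L := hL

lemma discrim_div_nonneg {α a L : ℝ} (hα : 0 < α) (ha : 0 ≤ a) (hL : 4 * α * a ≤ L) :
    0 ≤ L ^ 2 / (4 * α ^ 2) - a * L / α := by
  have hL0 : 0 ≤ L := by nlinarith
  have : L ^ 2 / (4 * α ^ 2) - a * L / α = L * (L - 4 * α * a) / (4 * α ^ 2) := by
    field_simp
  rw [this]
  exact div_nonneg (mul_nonneg hL0 (sub_nonneg.2 hL)) (by positivity)

lemma quadratic_eq_mul_sub_roots {α L c s : ℝ} (hα : α ≠ 0)
    (hs : s ^ 2 = L ^ 2 / (4 * α ^ 2) - c / α) (p : ℝ) :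
    α * p ^ 2 - L * p + c = α * (p - (L / (2 * α) - s)) * (p - (L / (2 * α) + s)) := by
  have expand : α * (p - (L / (2 * α) - s)) * (p - (L / (2 * α) + s)) =
      α * p ^ 2 - L * p + L ^ 2 / (4 * α) - α * s ^ 2 := by
    field_simp; ring
  rw [expand, hs]
  field_simp
  ring

lemma hasDerivAt_div_add_mul_log_sub {α a L p : ℝ} (hp : 0 < p) (hap : a < p) :
    HasDerivAt (fun x => L / x + α * log (x - a))
      ((α * p ^ 2 - L * p + a * L) / (p ^ 2 * (p - a))) p := by
  have hpa : p - a ≠ 0 := (sub_pos.2 hap).ne'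
  have hp0 : p ≠ 0 := hp.ne'
  have hlog : HasDerivAt (fun x => log (x - a)) (p - a)⁻¹ p := by
    simpa using ((hasDerivAt_id p).sub_const a).log hpa
  have hinv : HasDerivAt (fun x => L / x) (-L / p ^ 2) p := by
    simpa [div_eq_mul_inv] using (hasDerivAt_inv hp0).const_mul L
  exact (hinv.add (hlog.const_mul α)).congr_deriv (by field_simp; ring)

lemma isMaxOn_div_add_mul_log_sub {α a h L p₁ p₂ : ℝ} (hα : 0 < α) (ha : 0 ≤ a)
    (hq : ∀ p, α * p ^ 2 - L * p + a * L = α * (p - p₁) * (p - p₂))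
    (hap₁ : a < p₁) (hp₁h : p₁ ≤ h) (hhp₂ : h ≤ p₂) :
    IsMaxOn (fun p => L / p + α * log (p - a)) (Ioc a h) p₁ := by
  set g := fun p => L / p + α * log (p - a)
  have hderiv : ∀ p, a < p → HasDerivAt g ((α * p ^ 2 - L * p + a * L) / (p ^ 2 * (p - a))) p :=
    fun p hp => hasDerivAt_div_add_mul_log_sub (ha.trans_lt hp) hp
  have hcont : ∀ s ⊆ Ioi a, ContinuousOn g s := fun s hs p hp =>
    (hderiv p (hs hp)).continuousAt.continuousWithinAt
  have hpos : ∀ p, a < p → 0 < p ^ 2 * (p - a) := fun p hp => by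
    have := ha.trans_lt hp; have := sub_pos.2 hp; positivity
  have hmono : MonotoneOn g (Ioc a p₁) := by
    refine monotoneOn_of_hasDerivWithinAt_nonneg (convex_Ioc a p₁)
      (hcont _ Ioc_subset_Ioi_self) (fun p hp => (hderiv p ?_).hasDerivWithinAt) fun p hp => ?_
    · exact (interior_subset hp : p ∈ Ioc a p₁).1
    rw [interior_Ioc] at hp
    refine div_nonneg ?_ (hpos p hp.1).le
    rw [hq]
    exact mul_nonneg_of_nonpos_of_nonpos
      (mul_nonpos_of_nonneg_of_nonpos hα.le (by linarith [hp.2])) (by linarith [hp.2])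
  have hanti : AntitoneOn g (Icc p₁ h) := by
    refine antitoneOn_of_hasDerivWithinAt_nonpos (convex_Icc p₁ h)
      (hcont _ fun p hp => hap₁.trans_le hp.1) (fun p hp => (hderiv p ?_).hasDerivWithinAt)
      fun p hp => ?_
    · exact hap₁.trans_le (interior_subset hp : p ∈ Icc p₁ h).1
    rw [interior_Icc] at hp
    refine div_nonpos_of_nonpos_of_nonneg ?_ (hpos p (hap₁.trans hp.1)).le
    rw [hq]
    exact mul_nonpos_of_nonneg_of_nonpos
      (mul_nonneg hα.le (by linarith [hp.1])) (by linarith [hp.2])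
  intro p hp
  rcases le_total p p₁ with hle | hle
  · exact hmono ⟨hp.1, hle⟩ ⟨hap₁, le_rfl⟩ hle
  · exact hanti ⟨le_rfl, hp₁h⟩ ⟨hle, hp.2⟩ hle

lemma roots_bracket_of_mul_sq_div_sub_le {α a h L p₁ p₂ : ℝ} (hα : 0 < α) (ha : 0 < a)
    (hah : a < h) (hL : α * h ^ 2 / (h - a) ≤ L)
    (hq : ∀ p, α * p ^ 2 - L * p + a * L = α * (p - p₁) * (p - p₂)) (h₁₂ : p₁ ≤ p₂) :
    a < p₁ ∧ p₁ ≤ h ∧ h ≤ p₂ := by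
  have hsum : α * (p₁ + p₂) = L := by linear_combination hq 1 - hq 0
  have hap₂ : a < p₂ := by
    nlinarith [four_mul_mul_le_of_mul_sq_div_sub_le hα.le hah hL]
  have hqa : 0 < α * (a - p₁) * (a - p₂) := by
    rw [← hq, show α * a ^ 2 - L * a + a * L = α * a ^ 2 by ring]
    positivity
  have hqh : α * (h - p₁) * (h - p₂) ≤ 0 := by
    rw [← hq]
    nlinarith [(div_le_iff₀ (sub_pos.2 hah)).1 hL]
  refine ⟨?_, ?_, ?_⟩ <;> by_contra! H
  · exact hqa.not_ge <| mul_nonpos_of_nonneg_of_nonpos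
      (mul_nonneg hα.le (sub_nonneg.2 H)) (sub_nonpos.2 hap₂.le)
  · exact hqh.not_gt <| mul_pos_of_neg_of_neg
      (mul_neg_of_pos_of_neg hα (sub_neg.2 H)) (sub_neg.2 (H.trans_le h₁₂))
  · exact hqh.not_gt <| mul_pos (mul_pos hα (sub_pos.2 (h₁₂.trans_lt H))) (sub_pos.2 H)

lemma rpow_one_div_mul_rpow_eq_exp {α a δ p : ℝ} (hδ : 0 < δ) (hap : a < p) :
    δ ^ (1 / p) * (p - a) ^ α = exp (log δ / p + α * log (p - a)) := by
  rw [rpow_def_of_pos hδ, rpow_def_of_pos (sub_pos.2 hap), ← exp_add]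
  ring_nf

/-- For `δ ≥ exp(αh²/(h-a))`, the supremum of `δ^{1/p}(p-a)^α` over `p ∈ (a,h]` is
attained at `p₁ = log δ/(2α) - √((log δ)²/(4α²) - a log δ/α) ∈ (a,h]`. -/
theorem fund_weight_left (α a h δ : ℝ) (hα : 0 < α) (ha : 1 ≤ a) (hah : a < h)
    (hδ : Real.exp (α * h ^ 2 / (h - a)) ≤ δ)
    (p₁ : ℝ)
    (hp₁ : p₁ = Real.log δ / (2 * α) -
      Real.sqrt (Real.log δ ^ 2 / (4 * α ^ 2) - a * Real.log δ / α)) :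
    p₁ ∈ Set.Ioc a h ∧
    sSup ((fun p : ℝ => δ ^ (1 / p) * (p - a) ^ α) '' Set.Ioc a h) =
      δ ^ (1 / p₁) * (p₁ - a) ^ α := by
  have hδ0 : 0 < δ := (exp_pos _).trans_le hδ
  have hL : α * h ^ 2 / (h - a) ≤ log δ := (le_log_iff_exp_le hδ0).2 hδ
  have ha0 : 0 < a := one_pos.trans_le ha
  set s := √(log δ ^ 2 / (4 * α ^ 2) - a * log δ / α)
  have hs : s ^ 2 = log δ ^ 2 / (4 * α ^ 2) - a * log δ / α := sq_sqrt <|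
    discrim_div_nonneg hα ha0.le (four_mul_mul_le_of_mul_sq_div_sub_le hα.le hah hL)
  have hq : ∀ p, α * p ^ 2 - log δ * p + a * log δ =
      α * (p - p₁) * (p - (log δ / (2 * α) + s)) :=
    hp₁ ▸ quadratic_eq_mul_sub_roots hα.ne' hs
  have hs0 : 0 ≤ s := sqrt_nonneg _
  have h₁₂ : p₁ ≤ log δ / (2 * α) + s := by linarith
  obtain ⟨hap₁, hp₁h, hhp₂⟩ := roots_bracket_of_mul_sq_div_sub_le hα ha0 hah hL hq h₁₂
  have hmax := isMaxOn_div_add_mul_log_sub hα ha0.le hq hap₁ hp₁h hhp₂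
  refine ⟨⟨hap₁, hp₁h⟩, IsGreatest.csSup_eq ⟨mem_image_of_mem _ ⟨hap₁, hp₁h⟩, ?_⟩⟩
  rintro _ ⟨p, hp, rfl⟩
  dsimp only
  rw [rpow_one_div_mul_rpow_eq_exp hδ0 hp.1, rpow_one_div_mul_rpow_eq_exp hδ0 hap₁]
  exact exp_le_exp.2 (hmax hp)
end

section
/- Let 1 ≤ a < b < ∞, γ > −1/b, ν > −1/b, and define f : ℝ → ℝ by f(x) = 1_{{|x|≥1}} |x|^{−1/a} (log|x|)^γ + 1_{{0<|x|<1}} |x|^{−1/b} |log|x||^ν. Then, with respect to Lebesgue measure on ℝ: (i) sup_{p∈(a,b)} min((p−a)^{γ+1/a}, (b−p)^{ν+1/b}) · |f|_p < ∞; (ii) lim_{p→b−} (b−p)^{ν+1/b} |f|_p = b^{ν+1/b} (2Γ(bν+1))^{1/b} > 0; and (iii) lim_{p→a+} (p−a)^{γ+1/a} |f|_p = a^{γ+1/a} (2Γ(aγ+1))^{1/a} > 0. In particular f belongs to the Grand Lebesgue space G(a,b; γ+1/a, ν+1/b) but not to its subspace G°. -/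
/-!
For `a < p < b` the substitutions `x = e^t` on `(1, ∞)` and `x = e^(-t)` on `(0, 1)` turn
`∫ |f|^p` into Gamma integrals:
`∫ |f|^p = 2 (|p/a - 1|^(-(pγ+1)) Γ(pγ+1) + |p/b - 1|^(-(pν+1)) Γ(pν+1))`.
As `p → a`, the weight `(p - a)^((γ + 1/a) p)` cancels the blow-up of the first term up to the
factor `a^(pγ+1) (p - a)^((p - a)/a) → a^(aγ+1)`, and kills the second term; taking `p`-th roots
gives the limit at `a`, and the limit at `b` is the mirror image. Away from the endpoints the
weighted norm is continuous, so finite limits at both ends bound it on all of `(a, b)`.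
-/

open MeasureTheory Filter Set Real
open scoped Topology

/-- `∫ x^(-c) |log x|^d` over `(1, ∞)` when `c > 1`, and over `(0, 1)` when `c < 1`. -/
noncomputable def powLogIntegral (c d : ℝ) : ℝ := |c - 1| ^ (-(d + 1)) * Gamma (d + 1)

lemma powLogIntegral_nonneg (c : ℝ) {d : ℝ} (hd : -1 < d) : 0 ≤ powLogIntegral c d :=
  mul_nonneg (rpow_nonneg (abs_nonneg _) _) (Gamma_pos_of_pos (by linarith)).le

lemma powLogIntegral_pos {c d : ℝ} (hc : c ≠ 1) (hd : -1 < d) : 0 < powLogIntegral c d :=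
  mul_pos (rpow_pos_of_pos (abs_pos.mpr (sub_ne_zero.mpr hc)) _) (Gamma_pos_of_pos (by linarith))

lemma image_exp_one_mul_Ioi_zero : (fun t => exp (1 * t)) '' Ioi 0 = Ioi 1 := by
  ext x
  constructor
  · rintro ⟨t, ht, rfl⟩
    exact one_lt_exp_iff.mpr (by simpa using ht)
  · intro hx
    exact ⟨log x, log_pos hx, by simp [exp_log (zero_lt_one.trans hx)]⟩

lemma image_exp_neg_one_mul_Ioi_zero : (fun t => exp (-1 * t)) '' Ioi 0 = Ioo 0 1 := by
  ext x
  constructor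
  · rintro ⟨t, ht, rfl⟩
    exact ⟨exp_pos _, exp_lt_one_iff.mpr (by simpa using ht)⟩
  · rintro ⟨hx0, hx1⟩
    exact ⟨-log x, neg_pos.mpr (log_neg hx0 hx1), by simp [exp_log hx0]⟩

lemma setIntegral_image_exp_mul_rpow_neg_mul_abs_log_rpow {σ c d : ℝ} (hσ : |σ| = 1)
    (hc : 0 < σ * (c - 1)) (hd : -1 < d) :
    ∫ x in (fun t => exp (σ * t)) '' Ioi 0, x ^ (-c) * |log x| ^ d = powLogIntegral c d := by
  rw [integral_image_eq_integral_abs_deriv_smul measurableSet_Ioi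
    (fun t _ => ((hasDerivAt_id' t).const_mul σ).exp.hasDerivWithinAt)
    ((exp_injective.comp (mul_right_injective₀ (by rintro rfl; simp at hσ))).injOn)]
  have hσc : σ * (c - 1) = |c - 1| := by
    rw [← abs_of_pos hc, abs_mul, hσ, one_mul]
  have hΓ := integral_rpow_mul_exp_neg_mul_Ioi (a := d + 1) (by linarith) hc
  rw [add_sub_cancel_right, one_div, inv_rpow hc.le, ← rpow_neg hc.le, hσc] at hΓ
  rw [powLogIntegral, ← hΓ]
  refine setIntegral_congr_fun measurableSet_Ioi fun t (ht : 0 < t) => ?_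
  simp only [smul_eq_mul, log_exp, mul_one, abs_mul, hσ, one_mul, abs_of_pos ht,
    abs_of_pos (exp_pos _)]
  rw [← exp_mul, ← hσc, mul_comm (t ^ d), ← mul_assoc, ← exp_add]
  ring_nf

noncomputable def twoSidedPowLogIntegral (c d c' d' p : ℝ) : ℝ :=
  2 * (powLogIntegral (p / c) (p * d) + powLogIntegral (p / c') (p * d'))

lemma twoSidedPowLogIntegral_comm (c d c' d' p : ℝ) :
    twoSidedPowLogIntegral c d c' d' p = twoSidedPowLogIntegral c' d' c d p := by
  rw [twoSidedPowLogIntegral, twoSidedPowLogIntegral, add_comm]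

lemma twoSidedPowLogIntegral_nonneg {c d c' d' p : ℝ} (hd : -1 < p * d) (hd' : -1 < p * d') :
    0 ≤ twoSidedPowLogIntegral c d c' d' p := by
  have := powLogIntegral_nonneg (p / c) hd
  have := powLogIntegral_nonneg (p / c') hd'
  rw [twoSidedPowLogIntegral]
  positivity

lemma abs_rpow_eq_indicator_add_indicator {a b γ ν p : ℝ} {f : ℝ → ℝ} (hp : p ≠ 0)
    (hf : ∀ x, f x =
      {x : ℝ | 1 ≤ |x|}.indicator (fun x => |x| ^ (-(1 / a)) * log |x| ^ γ) x +
      {x : ℝ | 0 < |x| ∧ |x| < 1}.indicator (fun x => |x| ^ (-(1 / b)) * |(log |x|)| ^ ν) x)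
    (x : ℝ) :
    |f x| ^ p = (Ici 1).indicator (fun y => y ^ (-(p / a)) * |log y| ^ (p * γ)) |x|
      + (Ioo 0 1).indicator (fun y => y ^ (-(p / b)) * |log y| ^ (p * ν)) |x| := by
  have hpow : ∀ {y s t : ℝ}, 0 ≤ y → (y ^ (-(1 / s)) * |log y| ^ t) ^ p
      = y ^ (-(p / s)) * |log y| ^ (p * t) := fun {y s t} hy => by
    rw [mul_rpow (rpow_nonneg hy _) (rpow_nonneg (abs_nonneg _) _), ← rpow_mul hy,
      ← rpow_mul (abs_nonneg _), mul_comm t, neg_mul, one_div_mul_eq_div]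
  rw [hf x]
  rcases (abs_nonneg x).eq_or_lt with hx | hx
  · obtain rfl : x = 0 := abs_eq_zero.mp hx.symm
    simp [zero_rpow hp]
  rcases lt_or_ge |x| 1 with hx1 | hx1
  · rw [indicator_of_notMem (show x ∉ {x : ℝ | 1 ≤ |x|} from not_le.mpr hx1),
      indicator_of_mem (show x ∈ {x : ℝ | 0 < |x| ∧ |x| < 1} from ⟨hx, hx1⟩),
      indicator_of_notMem (show |x| ∉ Ici (1 : ℝ) from not_le.mpr hx1),
      indicator_of_mem (show |x| ∈ Ioo (0 : ℝ) 1 from ⟨hx, hx1⟩), zero_add, zero_add,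
      abs_of_nonneg (by positivity), hpow (abs_nonneg x)]
  · rw [indicator_of_mem (show x ∈ {x : ℝ | 1 ≤ |x|} from hx1),
      indicator_of_notMem (show x ∉ {x : ℝ | 0 < |x| ∧ |x| < 1} from fun h => h.2.not_ge hx1),
      indicator_of_mem (show |x| ∈ Ici (1 : ℝ) from hx1),
      indicator_of_notMem (show |x| ∉ Ioo (0 : ℝ) 1 from fun h => h.2.not_ge hx1),
      add_zero, add_zero, ← abs_of_nonneg (log_nonneg hx1), abs_of_nonneg (by positivity),
      hpow (abs_nonneg x), abs_abs]

lemma integral_abs_rpow_eq_twoSidedPowLogIntegral {a b γ ν p : ℝ} {f : ℝ → ℝ} (ha : 0 < a)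
    (hpa : a < p) (hpb : p < b) (hγ : -1 < p * γ) (hν : -1 < p * ν)
    (hf : ∀ x, f x =
      {x : ℝ | 1 ≤ |x|}.indicator (fun x => |x| ^ (-(1 / a)) * log |x| ^ γ) x +
      {x : ℝ | 0 < |x| ∧ |x| < 1}.indicator (fun x => |x| ^ (-(1 / b)) * |(log |x|)| ^ ν) x) :
    ∫ x, |f x| ^ p = twoSidedPowLogIntegral a γ b ν p := by
  have hb : 0 < b := ha.trans (hpa.trans hpb)
  have hpa' : 1 < p / a := (one_lt_div ha).mpr hpa
  have hpb' : p / b < 1 := (div_lt_one hb).mpr hpb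
  have h₁ : ∫ y in Ici 1, y ^ (-(p / a)) * |log y| ^ (p * γ)
      = powLogIntegral (p / a) (p * γ) := by
    rw [integral_Ici_eq_integral_Ioi, ← image_exp_one_mul_Ioi_zero]
    exact setIntegral_image_exp_mul_rpow_neg_mul_abs_log_rpow abs_one (by linarith) hγ
  have h₂ : ∫ y in Ioo 0 1, y ^ (-(p / b)) * |log y| ^ (p * ν)
      = powLogIntegral (p / b) (p * ν) := by
    rw [← image_exp_neg_one_mul_Ioi_zero]
    exact setIntegral_image_exp_mul_rpow_neg_mul_abs_log_rpow (by norm_num) (by linarith) hν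
  have hi₁ : IntegrableOn _ (Ici (1 : ℝ)) :=
    .of_integral_ne_zero (h₁ ▸ (powLogIntegral_pos hpa'.ne' hγ).ne')
  have hi₂ : IntegrableOn _ (Ioo (0 : ℝ) 1) :=
    .of_integral_ne_zero (h₂ ▸ (powLogIntegral_pos hpb'.ne hν).ne')
  simp_rw [abs_rpow_eq_indicator_add_indicator (ha.trans hpa).ne' hf]
  rw [integral_comp_abs (f := fun y => _ + _), integral_add
    (hi₁.integrable_indicator measurableSet_Ici).restrict
    (hi₂.integrable_indicator measurableSet_Ioo).restrict,
    setIntegral_indicator measurableSet_Ici, setIntegral_indicator measurableSet_Ioo,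
    inter_eq_right.mpr (Ici_subset_Ioi.mpr zero_lt_one),
    inter_eq_right.mpr Ioo_subset_Ioi_self, h₁, h₂, twoSidedPowLogIntegral]

lemma mul_add_one_pos_of_neg_one_div_lt {b c p : ℝ} (hp : 0 ≤ p) (hpb : p ≤ b)
    (hc : -1 / b < c) : 0 < p * c + 1 := by
  rcases le_or_gt 0 c with hc0 | hc0
  · nlinarith
  have hb : 0 < b := by
    by_contra! hb
    linarith [div_nonneg_of_nonpos (by norm_num : (-1 : ℝ) ≤ 0) hb]
  have : -1 < b * c := by rwa [div_lt_iff₀ hb, mul_comm] at hc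
  nlinarith

/-- Also at `x = 0`, since `0 ^ 0 = 1`. -/
lemma abs_rpow_mul_self_eq_exp (k x : ℝ) : |x| ^ (x * k) = exp (k * (x * log x)) := by
  rcases eq_or_ne x 0 with rfl | hx
  · simp
  rw [rpow_def_of_pos (abs_pos.mpr hx), log_abs]
  ring_nf

lemma continuous_abs_rpow_mul_self (k : ℝ) : Continuous fun x : ℝ => |x| ^ (x * k) := by
  simp_rw [abs_rpow_mul_self_eq_exp]
  exact (continuous_const.mul continuous_mul_log).rexp

lemma continuousAt_Gamma_mul_add_one {d p : ℝ} (hpd : 0 < p * d + 1) :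
    ContinuousAt (fun q => Gamma (q * d + 1)) p :=
  (differentiableOn_Gamma_Ioi.continuousOn.continuousAt (Ioi_mem_nhds hpd)).comp
    (f := fun q => q * d + 1) (by fun_prop)

lemma continuousAt_powLogIntegral {c d p : ℝ} (hc : c ≠ 0) (hp : p ≠ c)
    (hpd : 0 < p * d + 1) :
    ContinuousAt (fun q => powLogIntegral (q / c) (q * d)) p := by
  refine ContinuousAt.mul ?_ (continuousAt_Gamma_mul_add_one hpd)
  refine ContinuousAt.rpow (by fun_prop) (by fun_prop) (Or.inl ?_)
  rwa [abs_ne_zero, sub_ne_zero, Ne, div_eq_one_iff_eq hc]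

lemma abs_sub_rpow_mul_powLogIntegral {c p : ℝ} (d : ℝ) (hc : 0 < c) (hp : p ≠ c) :
    |p - c| ^ ((d + 1 / c) * p) * powLogIntegral (p / c) (p * d)
      = c ^ (p * d + 1) * |p - c| ^ ((p - c) * (1 / c)) * Gamma (p * d + 1) := by
  have hpc : 0 < |p - c| := abs_pos.mpr (sub_ne_zero.mpr hp)
  have hexp : (d + 1 / c) * p - (p * d + 1) = (p - c) * (1 / c) := by field_simp; ring
  rw [powLogIntegral, div_sub_one hc.ne', abs_div, abs_of_pos hc, div_rpow hpc.le hc.le,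
    rpow_neg hc.le, div_inv_eq_mul, ← hexp, rpow_sub hpc, rpow_neg hpc.le]
  field_simp [(rpow_pos_of_pos hpc (p * d + 1)).ne']

lemma tendsto_abs_sub_rpow_mul_twoSidedPowLogIntegral {c c' d d' : ℝ} (hc : 0 < c)
    (hc' : c' ≠ 0) (hcc' : c ≠ c') (hd : 0 < c * d + 1) (hd' : 0 < c * d' + 1) :
    Tendsto (fun p => |p - c| ^ ((d + 1 / c) * p) * twoSidedPowLogIntegral c d c' d' p)
      (𝓝[≠] c) (𝓝 (2 * c ^ (c * d + 1) * Gamma (c * d + 1))) := by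
  -- the weighted expression off `c`, in a form that is continuous at `c`
  set G := fun p => 2 * (c ^ (p * d + 1) * |p - c| ^ ((p - c) * (1 / c)) * Gamma (p * d + 1)
    + |p - c| ^ ((d + 1 / c) * p) * powLogIntegral (p / c') (p * d'))
  have hdc : 0 < (d + 1 / c) * c := by rwa [add_mul, one_div_mul_cancel hc.ne', mul_comm]
  have hG : ContinuousAt G c := by
    have hsing : ContinuousAt (fun p => |p - c| ^ ((p - c) * (1 / c))) c :=
      ((continuous_abs_rpow_mul_self (1 / c)).comp (continuous_sub_right c)).continuousAt
    refine (((continuousAt_const.rpow (by fun_prop) (Or.inl hc.ne')).mul hsing).mul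
      (continuousAt_Gamma_mul_add_one hd)).add ((ContinuousAt.rpow (by fun_prop) (by fun_prop)
        (Or.inr hdc)).mul (continuousAt_powLogIntegral hc' hcc' hd')) |>.const_mul 2
  have hGc : G c = 2 * c ^ (c * d + 1) * Gamma (c * d + 1) := by
    simp only [G, sub_self, abs_zero, zero_mul, rpow_zero, mul_one, zero_rpow hdc.ne', add_zero]
    ring
  refine (hGc ▸ hG.tendsto.mono_left nhdsWithin_le_nhds).congr' ?_
  filter_upwards [self_mem_nhdsWithin] with p hp
  rw [twoSidedPowLogIntegral, mul_left_comm, mul_add, abs_sub_rpow_mul_powLogIntegral d hc hp]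

lemma tendsto_abs_sub_rpow_mul_twoSidedPowLogIntegral_rpow_one_div {c c' d d' : ℝ}
    (hc : 0 < c) (hc' : c' ≠ 0) (hcc' : c ≠ c') (hd : 0 < c * d + 1) (hd' : 0 < c * d' + 1) :
    Tendsto (fun p => |p - c| ^ (d + 1 / c) * twoSidedPowLogIntegral c d c' d' p ^ (1 / p))
      (𝓝[≠] c) (𝓝 (c ^ (d + 1 / c) * (2 * Gamma (c * d + 1)) ^ (1 / c))) := by
  have hΓ := Gamma_pos_of_pos hd
  have hL : (2 * c ^ (c * d + 1) * Gamma (c * d + 1)) ^ (1 / c)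
      = c ^ (d + 1 / c) * (2 * Gamma (c * d + 1)) ^ (1 / c) := by
    rw [mul_comm 2, mul_assoc, mul_rpow (by positivity) (by positivity), ← rpow_mul hc.le]
    congr 2
    field_simp
  have hinv : Tendsto (fun p : ℝ => 1 / p) (𝓝[≠] c) (𝓝 (1 / c)) :=
    (tendsto_const_nhds.div tendsto_id hc.ne').mono_left nhdsWithin_le_nhds
  have hlim := (tendsto_abs_sub_rpow_mul_twoSidedPowLogIntegral hc hc' hcc' hd hd').rpow hinv
    (Or.inl (by positivity))
  rw [hL] at hlim
  refine hlim.congr' ?_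
  have hpos : ∀ᶠ p in 𝓝 c, 0 < p ∧ -1 < p * d ∧ -1 < p * d' := by
    filter_upwards [eventually_gt_nhds hc,
      ((continuous_mul_const d).tendsto c).eventually_const_lt (by linarith : -1 < c * d),
      ((continuous_mul_const d').tendsto c).eventually_const_lt (by linarith : -1 < c * d')]
      with p hp hpd hpd'
    exact ⟨hp, hpd, hpd'⟩
  filter_upwards [nhdsWithin_le_nhds hpos] with p ⟨hp, hpd, hpd'⟩
  rw [mul_rpow (rpow_nonneg (abs_nonneg _) _) (twoSidedPowLogIntegral_nonneg hpd hpd'),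
    ← rpow_mul (abs_nonneg _), mul_assoc, mul_one_div_cancel hp.ne', mul_one]

lemma tendsto_sub_rpow_mul_twoSidedPowLogIntegral_rpow_one_div_nhdsGT {c c' d d' : ℝ}
    (hc : 0 < c) (hcc' : c < c') (hd : -1 / c' < d) (hd' : -1 / c' < d') :
    Tendsto (fun p => (p - c) ^ (d + 1 / c) * twoSidedPowLogIntegral c d c' d' p ^ (1 / p))
      (𝓝[>] c) (𝓝 (c ^ (d + 1 / c) * (2 * Gamma (c * d + 1)) ^ (1 / c))) := by
  refine ((tendsto_abs_sub_rpow_mul_twoSidedPowLogIntegral_rpow_one_div hc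
    (hc.trans hcc').ne' hcc'.ne (mul_add_one_pos_of_neg_one_div_lt hc.le hcc'.le hd)
    (mul_add_one_pos_of_neg_one_div_lt hc.le hcc'.le hd')).mono_left
      (nhdsGT_le_nhdsNE c)).congr' ?_
  filter_upwards [self_mem_nhdsWithin] with p (hp : c < p)
  rw [abs_of_pos (sub_pos.mpr hp)]

lemma tendsto_sub_rpow_mul_twoSidedPowLogIntegral_rpow_one_div_nhdsLT {c c' d d' : ℝ}
    (hc' : 0 < c') (hc'c : c' < c) (hd : -1 / c < d) (hd' : -1 / c < d') :
    Tendsto (fun p => (c - p) ^ (d + 1 / c) * twoSidedPowLogIntegral c' d' c d p ^ (1 / p))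
      (𝓝[<] c) (𝓝 (c ^ (d + 1 / c) * (2 * Gamma (c * d + 1)) ^ (1 / c))) := by
  have hc : 0 < c := hc'.trans hc'c
  refine ((tendsto_abs_sub_rpow_mul_twoSidedPowLogIntegral_rpow_one_div hc hc'.ne' hc'c.ne'
    (mul_add_one_pos_of_neg_one_div_lt hc.le le_rfl hd)
    (mul_add_one_pos_of_neg_one_div_lt hc.le le_rfl hd')).mono_left
      (nhdsLT_le_nhdsNE c)).congr' ?_
  filter_upwards [self_mem_nhdsWithin] with p (hp : p < c)
  rw [abs_sub_comm, abs_of_pos (sub_pos.mpr hp), twoSidedPowLogIntegral_comm]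

lemma continuousOn_twoSidedPowLogIntegral_rpow_one_div {a b γ ν : ℝ} (ha : 0 < a)
    (hγ : -1 / b < γ) (hν : -1 / b < ν) :
    ContinuousOn (fun p => twoSidedPowLogIntegral a γ b ν p ^ (1 / p)) (Ioo a b) := by
  intro p ⟨hpa, hpb⟩
  have hp : 0 < p := ha.trans hpa
  refine ContinuousAt.continuousWithinAt <| ContinuousAt.rpow ?_
    (continuousAt_const.div continuousAt_id hp.ne') (Or.inr (one_div_pos.mpr hp))
  exact ((continuousAt_powLogIntegral ha.ne' hpa.ne'
    (mul_add_one_pos_of_neg_one_div_lt hp.le hpb.le hγ)).add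
    (continuousAt_powLogIntegral (ha.trans (hpa.trans hpb)).ne' hpb.ne
      (mul_add_one_pos_of_neg_one_div_lt hp.le hpb.le hν))).const_mul 2

lemma exists_forall_Ioo_le_of_eventually_le {a b A B : ℝ} {g : ℝ → ℝ}
    (hg : ContinuousOn g (Ioo a b)) (ha : ∀ᶠ p in 𝓝[>] a, g p ≤ A)
    (hb : ∀ᶠ p in 𝓝[<] b, g p ≤ B) : ∃ C, ∀ p ∈ Ioo a b, g p ≤ C := by
  obtain ⟨u, hu, hAu⟩ := mem_nhdsGT_iff_exists_Ioo_subset.mp ha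
  obtain ⟨v, hv, hBv⟩ := mem_nhdsLT_iff_exists_Ioo_subset.mp hb
  obtain ⟨M, hM⟩ := isCompact_Icc.bddAbove_image (hg.mono (Icc_subset_Ioo hu hv))
  refine ⟨max (max A B) M, fun p hp => ?_⟩
  rcases lt_or_ge p u with hpu | hpu
  · exact (hAu ⟨hp.1, hpu⟩).trans ((le_max_left _ _).trans (le_max_left _ _))
  rcases le_or_gt p v with hpv | hpv
  · exact (hM (mem_image_of_mem g ⟨hpu, hpv⟩)).trans (le_max_right _ _)
  · exact (hBv ⟨hpv, hp.2⟩).trans ((le_max_right _ _).trans (le_max_left _ _))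

lemma exists_forall_Ioo_min_mul_le {a b L₁ L₂ : ℝ} {w₁ w₂ N : ℝ → ℝ}
    (hw₁ : ContinuousOn w₁ (Ioo a b)) (hw₂ : ContinuousOn w₂ (Ioo a b))
    (hN : ContinuousOn N (Ioo a b)) (hN₀ : ∀ p ∈ Ioo a b, 0 ≤ N p) (hab : a < b)
    (h₁ : Tendsto (fun p => w₁ p * N p) (𝓝[>] a) (𝓝 L₁))
    (h₂ : Tendsto (fun p => w₂ p * N p) (𝓝[<] b) (𝓝 L₂)) :
    ∃ C, ∀ p ∈ Ioo a b, min (w₁ p) (w₂ p) * N p ≤ C := by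
  refine exists_forall_Ioo_le_of_eventually_le ((hw₁.inf hw₂).mul hN) (A := L₁ + 1)
    (B := L₂ + 1) ?_ ?_
  · filter_upwards [h₁.eventually_le_const (lt_add_one L₁), Ioo_mem_nhdsGT hab] with p hp hpI
    exact (mul_le_mul_of_nonneg_right (min_le_left _ _) (hN₀ p hpI)).trans hp
  · filter_upwards [h₂.eventually_le_const (lt_add_one L₂), Ioo_mem_nhdsLT hab] with p hp hpI
    exact (mul_le_mul_of_nonneg_right (min_le_right _ _) (hN₀ p hpI)).trans hp

/-- The basic example `f(x) = 1_{{|x|≥1}}|x|^{-1/a}(log|x|)^γ + 1_{{0<|x|<1}}|x|^{-1/b}|log|x||^ν`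
belongs to the Grand Lebesgue space `G(a,b; γ+1/a, ν+1/b)` but not to `G°`: the weighted
norms are uniformly bounded on `(a,b)`, and tend to explicit positive limits at both
endpoints. -/
theorem example_in_G_not_Go (a b γ ν : ℝ) (ha : 1 ≤ a) (hab : a < b)
    (hγ : -1 / b < γ) (hν : -1 / b < ν)
    (f : ℝ → ℝ)
    (hf : ∀ x, f x =
      Set.indicator {x : ℝ | 1 ≤ |x|}
        (fun x => |x| ^ (-(1 / a)) * Real.log |x| ^ γ) x +
      Set.indicator {x : ℝ | 0 < |x| ∧ |x| < 1}
        (fun x => |x| ^ (-(1 / b)) * (abs (Real.log |x|)) ^ ν) x) :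
    (∃ C : ℝ, ∀ p ∈ Set.Ioo a b,
        min ((p - a) ^ (γ + 1 / a)) ((b - p) ^ (ν + 1 / b)) *
          (∫ x : ℝ, |f x| ^ p) ^ (1 / p) ≤ C) ∧
    Tendsto (fun p : ℝ => (b - p) ^ (ν + 1 / b) * (∫ x : ℝ, |f x| ^ p) ^ (1 / p))
      (𝓝[<] b) (𝓝 (b ^ (ν + 1 / b) * (2 * Real.Gamma (b * ν + 1)) ^ (1 / b))) ∧
    0 < b ^ (ν + 1 / b) * (2 * Real.Gamma (b * ν + 1)) ^ (1 / b) ∧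
    Tendsto (fun p : ℝ => (p - a) ^ (γ + 1 / a) * (∫ x : ℝ, |f x| ^ p) ^ (1 / p))
      (𝓝[>] a) (𝓝 (a ^ (γ + 1 / a) * (2 * Real.Gamma (a * γ + 1)) ^ (1 / a))) ∧
    0 < a ^ (γ + 1 / a) * (2 * Real.Gamma (a * γ + 1)) ^ (1 / a) := by
  have ha₀ : 0 < a := zero_lt_one.trans_le ha
  have hb₀ : 0 < b := ha₀.trans hab
  have hpos {d : ℝ} (hd : -1 / b < d) {p : ℝ} (hp : p ∈ Ioo a b) : -1 < p * d := by
    linarith [mul_add_one_pos_of_neg_one_div_lt (ha₀.trans hp.1).le hp.2.le hd]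
  have hF : ∀ p ∈ Ioo a b, ∫ x, |f x| ^ p = twoSidedPowLogIntegral a γ b ν p := fun p hp =>
    integral_abs_rpow_eq_twoSidedPowLogIntegral ha₀ hp.1 hp.2 (hpos hγ hp) (hpos hν hp) hf
  have hTa : Tendsto (fun p : ℝ => (p - a) ^ (γ + 1 / a) * (∫ x : ℝ, |f x| ^ p) ^ (1 / p))
      (𝓝[>] a) (𝓝 (a ^ (γ + 1 / a) * (2 * Real.Gamma (a * γ + 1)) ^ (1 / a))) :=
    (tendsto_sub_rpow_mul_twoSidedPowLogIntegral_rpow_one_div_nhdsGT ha₀ hab hγ hν).congr'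
      (eventuallyEq_of_mem (Ioo_mem_nhdsGT hab) fun p hp => by rw [hF p hp])
  have hTb : Tendsto (fun p : ℝ => (b - p) ^ (ν + 1 / b) * (∫ x : ℝ, |f x| ^ p) ^ (1 / p))
      (𝓝[<] b) (𝓝 (b ^ (ν + 1 / b) * (2 * Real.Gamma (b * ν + 1)) ^ (1 / b))) :=
    (tendsto_sub_rpow_mul_twoSidedPowLogIntegral_rpow_one_div_nhdsLT ha₀ hab hν hγ).congr'
      (eventuallyEq_of_mem (Ioo_mem_nhdsLT hab) fun p hp => by rw [hF p hp])
  have hN : ContinuousOn (fun p => (∫ x, |f x| ^ p) ^ (1 / p)) (Ioo a b) :=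
    (continuousOn_twoSidedPowLogIntegral_rpow_one_div ha₀ hγ hν).congr fun p hp => by
      rw [hF p hp]
  have hΓa := Gamma_pos_of_pos (mul_add_one_pos_of_neg_one_div_lt ha₀.le hab.le hγ)
  have hΓb := Gamma_pos_of_pos (mul_add_one_pos_of_neg_one_div_lt hb₀.le le_rfl hν)
  refine ⟨exists_forall_Ioo_min_mul_le ?_ ?_ hN
    (fun p _ => rpow_nonneg (integral_nonneg fun x => by positivity) _) hab hTa hTb,
    hTb, by positivity, hTa, by positivity⟩
  · exact (continuousOn_id.sub continuousOn_const).rpow_const fun p hp =>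
      Or.inl (sub_pos.mpr hp.1).ne'
  · exact (continuousOn_const.sub continuousOn_id).rpow_const fun p hp =>
      Or.inl (sub_pos.mpr hp.2).ne'
end
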